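/- arXiv:2512.13027 — 11 statements merged into one kernel-verified Lean document; each statement's English description precedes it below -/
import Mathlib

section
/- Let m and n be positive integers. If (s,t) ∈ T^{1,in}_{m,n} and (s',t') ∈ T^{1,in}_{m,n} satisfy s − t = s' − t' (as integers), then s = s' and t = t'. That is, a terminal pair of difference equation type of size (m,n) is uniquely determined by its difference. -/
open Finset
open scoped Classical
/-- The L-shape domain `L_{m,n} = ([m]×{1}) ∪ ({1}×[n])`. -/
def LShape (m n : ℕ) : Finset (ℕ × ℕ) :=
  (Finset.Icc 1 m ×ˢ ({1} : Finset ℕ)) ∪ (({1} : Finset ℕ) ×ˢ Finset.Icc 1 n)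

/-- The condition `E_{m,n}` on a map defined (at least) on the L-shape. -/
def condE (m n : ℕ) (f : ℕ × ℕ → ℕ) : Prop :=
  (∀ i ∈ Finset.Icc 1 (m - 1),
    (f (i + 1, 1) : ℤ) - (f (i, 1) : ℤ) =
      ((Finset.Icc 1 n).filter (fun t => f (1, t) ≤ f (i + 1, 1))).card) ∧
  (∀ j ∈ Finset.Icc 1 (n - 1),
    (f (1, j + 1) : ℤ) - (f (1, j) : ℤ) =
      ((Finset.Icc 1 m).filter (fun s => f (s, 1) ≤ f (1, j + 1))).card)

/-- `f` is an injective L-shape of difference equation type of size `(m,n)`: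
an injection from `L_{m,n}` into `[mn]` satisfying `E_{m,n}` with `f(1,1) = 1`. -/
def isLShapeDE (m n : ℕ) (f : ℕ × ℕ → ℕ) : Prop :=
  Set.InjOn f (LShape m n) ∧ (∀ p ∈ LShape m n, f p ∈ Finset.Icc 1 (m * n)) ∧
    f (1, 1) = 1 ∧ condE m n f

lemma lshape_row {m n i : ℕ} (hi : i ∈ Finset.Icc 1 m) : (i, 1) ∈ LShape m n :=
  Finset.mem_union_left _ (Finset.mem_product.mpr ⟨hi, Finset.mem_singleton_self 1⟩)

lemma lshape_col {m n j : ℕ} (hj : j ∈ Finset.Icc 1 n) : (1, j) ∈ LShape m n :=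
  Finset.mem_union_right _ (Finset.mem_product.mpr ⟨Finset.mem_singleton_self 1, hj⟩)

lemma key_sum (m n : ℕ) (hm : 1 ≤ m) (hn : 1 ≤ n) (f : ℕ × ℕ → ℕ)
    (hf : isLShapeDE m n f) :
    (f (m, 1) : ℤ) + (f (1, n) : ℤ) = (m : ℤ) * n + 1 := by
  obtain ⟨hinj, hrange, h11, hE1, hE2⟩ := hf
  set c : ℕ → ℕ := fun i => ((Finset.Icc 1 n).filter (fun t => f (1, t) ≤ f (i, 1))).card with hc
  set d : ℕ → ℕ := fun j => ((Finset.Icc 1 m).filter (fun s => f (s, 1) ≤ f (1, j))).card with hd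
  have hpos : ∀ p ∈ LShape m n, 1 ≤ f p := fun p hp => (Finset.mem_Icc.mp (hrange p hp)).1
  have h1m : (1 : ℕ) ∈ Finset.Icc 1 m := Finset.mem_Icc.mpr ⟨le_refl 1, hm⟩
  have h1n : (1 : ℕ) ∈ Finset.Icc 1 n := Finset.mem_Icc.mpr ⟨le_refl 1, hn⟩
  have hcol1 : ∀ j ∈ Finset.Icc 1 n, f (1, j) = 1 → j = 1 := by
    intro j hj hfj
    have := hinj (lshape_col hj) (lshape_col h1n) (by rw [hfj, h11])
    exact (Prod.mk.injEq _ _ _ _ ▸ this).2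
  have hrow1 : ∀ i ∈ Finset.Icc 1 m, f (i, 1) = 1 → i = 1 := by
    intro i hi hfi
    have := hinj (lshape_row hi) (lshape_row h1m) (by rw [hfi, h11])
    exact (Prod.mk.injEq _ _ _ _ ▸ this).1
  have hc1 : c 1 = 1 := by
    have hfilt : (Finset.Icc 1 n).filter (fun t => f (1, t) ≤ f (1, 1)) = {1} := by
      ext j
      simp only [Finset.mem_filter, Finset.mem_singleton, h11]
      constructor
      · rintro ⟨hj, hle⟩
        exact hcol1 j hj (le_antisymm hle (hpos _ (lshape_col hj)))
      · rintro rfl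
        exact ⟨h1n, le_of_eq h11⟩
    rw [hc]
    simp only
    rw [hfilt, Finset.card_singleton]
  have hd1 : d 1 = 1 := by
    have hfilt : (Finset.Icc 1 m).filter (fun s => f (s, 1) ≤ f (1, 1)) = {1} := by
      ext i
      simp only [Finset.mem_filter, Finset.mem_singleton, h11]
      constructor
      · rintro ⟨hi, hle⟩
        exact hrow1 i hi (le_antisymm hle (hpos _ (lshape_row hi)))
      · rintro rfl
        exact ⟨h1m, le_of_eq h11⟩
    rw [hd]
    simp only
    rw [hfilt, Finset.card_singleton]
  have hSc : (∑ i ∈ Finset.Icc 1 m, (c i : ℤ)) = (f (m, 1) : ℤ) := by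
    rw [← Finset.Ico_add_one_right_eq_Icc, Finset.sum_Ico_eq_sum_range]
    have hmm : m + 1 - 1 = (m - 1) + 1 := by omega
    rw [hmm, Finset.sum_range_succ']
    have hg0 : ((c (1 + 0) : ℤ)) = 1 := by norm_num [hc1]
    rw [hg0]
    have htel : (∑ i ∈ Finset.range (m - 1), (c (1 + (i + 1)) : ℤ)) = (f (m, 1) : ℤ) - 1 := by
      have heq : ∀ i ∈ Finset.range (m - 1),
          (c (1 + (i + 1)) : ℤ) = (f (i + 1 + 1, 1) : ℤ) - (f (i + 1, 1) : ℤ) := by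
        intro i hi
        have hi' : i + 1 ∈ Finset.Icc 1 (m - 1) := by
          simp only [Finset.mem_range] at hi
          exact Finset.mem_Icc.mpr ⟨by omega, by omega⟩
        have h12 : 1 + (i + 1) = i + 1 + 1 := by omega
        rw [h12]
        exact (hE1 (i + 1) hi').symm
      rw [Finset.sum_congr rfl heq]
      have htel2 := Finset.sum_range_sub (fun i => (f (i + 1, 1) : ℤ)) (m - 1)
      rw [htel2]
      have hmm2 : m - 1 + 1 = m := by omega
      rw [hmm2, h11]
      push_cast
      ring
    rw [htel]
    ring
  have hSd : (∑ j ∈ Finset.Icc 1 n, (d j : ℤ)) = (f (1, n) : ℤ) := by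
    rw [← Finset.Ico_add_one_right_eq_Icc, Finset.sum_Ico_eq_sum_range]
    have hnn : n + 1 - 1 = (n - 1) + 1 := by omega
    rw [hnn, Finset.sum_range_succ']
    have hg0 : ((d (1 + 0) : ℤ)) = 1 := by norm_num [hd1]
    rw [hg0]
    have htel : (∑ j ∈ Finset.range (n - 1), (d (1 + (j + 1)) : ℤ)) = (f (1, n) : ℤ) - 1 := by
      have heq : ∀ j ∈ Finset.range (n - 1),
          (d (1 + (j + 1)) : ℤ) = (f (1, j + 1 + 1) : ℤ) - (f (1, j + 1) : ℤ) := by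
        intro j hj
        have hj' : j + 1 ∈ Finset.Icc 1 (n - 1) := by
          simp only [Finset.mem_range] at hj
          exact Finset.mem_Icc.mpr ⟨by omega, by omega⟩
        have h12 : 1 + (j + 1) = j + 1 + 1 := by omega
        rw [h12]
        exact (hE2 (j + 1) hj').symm
      rw [Finset.sum_congr rfl heq]
      have htel2 := Finset.sum_range_sub (fun j => (f (1, j + 1) : ℤ)) (n - 1)
      rw [htel2]
      have hnn2 : n - 1 + 1 = n := by omega
      rw [hnn2, h11]
      push_cast
      ring
    rw [htel]
    ring
  have hDC : (∑ i ∈ Finset.Icc 1 m, c i) + (∑ j ∈ Finset.Icc 1 n, d j) = m * n + 1 := by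
    have hcsum : ∀ i, c i = ∑ j ∈ Finset.Icc 1 n, if f (1, j) ≤ f (i, 1) then 1 else 0 :=
      fun i => Finset.card_filter _ _
    have hdsum : ∀ j, d j = ∑ i ∈ Finset.Icc 1 m, if f (i, 1) ≤ f (1, j) then 1 else 0 :=
      fun j => Finset.card_filter _ _
    have hpt : ∀ x y : ℕ,
        ((if y ≤ x then 1 else 0) + (if x ≤ y then 1 else 0) : ℕ) = 1 + if x = y then 1 else 0 := by
      intro x y
      split_ifs <;> omega
    have hinner : ∀ i ∈ Finset.Icc 1 m,
        (∑ j ∈ Finset.Icc 1 n, if f (i, 1) = f (1, j) then 1 else 0)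
          = if i = 1 then 1 else 0 := by
      intro i hi
      by_cases hi1 : i = 1
      · subst hi1
        rw [if_pos rfl, ← Finset.card_filter]
        have hfilt : (Finset.Icc 1 n).filter (fun j => f (1, 1) = f (1, j)) = {1} := by
          ext j
          simp only [Finset.mem_filter, Finset.mem_singleton, h11]
          constructor
          · rintro ⟨hj, he⟩
            exact hcol1 j hj he.symm
          · rintro rfl
            exact ⟨h1n, h11.symm⟩
        rw [hfilt, Finset.card_singleton]
      · rw [if_neg hi1]
        apply Finset.sum_eq_zero
        intro j hj
        rw [if_neg]
        intro heq
        have := hinj (lshape_row hi) (lshape_col hj) heq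
        exact hi1 (Prod.mk.injEq _ _ _ _ ▸ this).1
    calc (∑ i ∈ Finset.Icc 1 m, c i) + (∑ j ∈ Finset.Icc 1 n, d j)
        = (∑ i ∈ Finset.Icc 1 m, ∑ j ∈ Finset.Icc 1 n,
            ((if f (1, j) ≤ f (i, 1) then 1 else 0) + (if f (i, 1) ≤ f (1, j) then 1 else 0))) := by
          simp only [Finset.sum_add_distrib]
          rw [Finset.sum_comm (s := Finset.Icc 1 m) (t := Finset.Icc 1 n)
            (f := fun i j => if f (i, 1) ≤ f (1, j) then 1 else 0)]
          simp only [← hcsum, ← hdsum]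
      _ = (∑ i ∈ Finset.Icc 1 m, ∑ j ∈ Finset.Icc 1 n,
            (1 + if f (i, 1) = f (1, j) then 1 else 0)) := by
          exact Finset.sum_congr rfl fun i _ => Finset.sum_congr rfl fun j _ => hpt _ _
      _ = m * n + 1 := by
          simp only [Finset.sum_add_distrib]
          rw [Finset.sum_congr rfl hinner]
          rw [Finset.sum_ite_eq' (Finset.Icc 1 m) 1 (fun _ => 1), if_pos h1m]
          simp [Nat.card_Icc, mul_comm]
  have hcast := congrArg (fun x : ℕ => (x : ℤ)) hDC
  push_cast at hcast
  rw [hSc, hSd] at hcast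
  linarith [hcast]

/-- a terminal pair of difference equation type of size `(m,n)` is uniquely
determined by its difference `s − t`. -/
theorem terminalPair_determined_by_difference (m n : ℕ) (hm : 1 ≤ m) (hn : 1 ≤ n)
    (s t s' t' : ℕ)
    (h : ∃ f : ℕ × ℕ → ℕ, isLShapeDE m n f ∧ f (m, 1) = s ∧ f (1, n) = t)
    (h' : ∃ f : ℕ × ℕ → ℕ, isLShapeDE m n f ∧ f (m, 1) = s' ∧ f (1, n) = t')
    (hd : (s : ℤ) - (t : ℤ) = (s' : ℤ) - (t' : ℤ)) : s = s' ∧ t = t' := by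
  obtain ⟨f, hf, hs, ht⟩ := h
  obtain ⟨f', hf', hs', ht'⟩ := h'
  have k1 := key_sum m n hm hn f hf
  have k2 := key_sum m n hm hn f' hf'
  rw [hs, ht] at k1
  rw [hs', ht'] at k2
  constructor <;> omega
end

section
/- Let m, n be positive integers with m + n ≥ 3. For all real numbers ξ, ξ' with 0 < ξ ≤ ξ', it holds that Δ_{m,n}(ξ') ≤ Δ_{m,n}(ξ); that is, ξ ↦ Δ_{m,n}(ξ) is a non-increasing function of ξ on (0,∞). -/
open Finset
open scoped Classical

/-- The ranking table `τ^{m,n}_ξ(i,j) = #{(s,t) ∈ [m]×[n] : s + tξ ≤ i + jξ}`. -/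
noncomputable def tau (m n : ℕ) (ξ : ℝ) (i j : ℕ) : ℕ :=
  ((Finset.Icc 1 m ×ˢ Finset.Icc 1 n).filter
    (fun p => (p.1 : ℝ) + (p.2 : ℝ) * ξ ≤ (i : ℝ) + (j : ℝ) * ξ)).card

/-- `Δ_{m,n}(ξ) = τ^{m,n}_ξ(m,1) − τ^{m,n}_ξ(1,n)` as an integer. -/
noncomputable def Delta (m n : ℕ) (ξ : ℝ) : ℤ :=
  (tau m n ξ m 1 : ℤ) - (tau m n ξ 1 n : ℤ)

/-- `ξ ↦ Δ_{m,n}(ξ)` is non-increasing on `(0,∞)`. -/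
theorem Delta_antitone (m n : ℕ) (hm : 1 ≤ m) (hn : 1 ≤ n) (hmn : 3 ≤ m + n)
    (ξ ξ' : ℝ) (hξ : 0 < ξ) (hle : ξ ≤ ξ') :
    Delta m n ξ' ≤ Delta m n ξ := by
  unfold Delta tau
  apply sub_le_sub
  · exact_mod_cast Finset.card_le_card (by
      intro p hp
      simp only [Finset.mem_filter, Finset.mem_product, Finset.mem_Icc] at hp ⊢
      obtain ⟨⟨hs, ht⟩, h⟩ := hp
      refine ⟨⟨hs, ht⟩, ?_⟩
      have h1 : (1 : ℝ) ≤ (p.2 : ℝ) := by exact_mod_cast ht.1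
      nlinarith [h])
  · exact_mod_cast Finset.card_le_card (by
      intro p hp
      simp only [Finset.mem_filter, Finset.mem_product, Finset.mem_Icc] at hp ⊢
      obtain ⟨⟨hs, ht⟩, h⟩ := hp
      refine ⟨⟨hs, ht⟩, ?_⟩
      have h1 : (p.2 : ℝ) ≤ (n : ℝ) := by exact_mod_cast ht.2
      nlinarith [h])
end

section
/- Let m, n be positive integers with m + n ≥ 3 and let ξ, ξ' > 0 be real numbers. If Δ_{m,n}(ξ) = Δ_{m,n}(ξ'), then τ^{m,n}_ξ(m,1) = τ^{m,n}_{ξ'}(m,1) and τ^{m,n}_ξ(1,n) = τ^{m,n}_{ξ'}(1,n). -/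
open Finset
open scoped Classical

lemma tau_aux (m n : ℕ) (ξ ξ' : ℝ) (hle : ξ ≤ ξ') :
    tau m n ξ' m 1 ≤ tau m n ξ m 1 ∧ tau m n ξ 1 n ≤ tau m n ξ' 1 n := by
  constructor <;>
  · apply Finset.card_le_card
    intro p hp
    simp only [Finset.mem_filter, Finset.mem_product, Finset.mem_Icc] at hp ⊢
    obtain ⟨⟨⟨h1, h2⟩, h3, h4⟩, h5⟩ := hp
    refine ⟨⟨⟨h1, h2⟩, h3, h4⟩, ?_⟩
    have hb : (1:ℝ) ≤ (p.2:ℝ) := by exact_mod_cast h3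
    have hb' : (p.2:ℝ) ≤ (n:ℝ) := by exact_mod_cast h4
    push_cast at h5 ⊢
    nlinarith [mul_nonneg (sub_nonneg.2 hb) (sub_nonneg.2 hle),
      mul_nonneg (sub_nonneg.2 hb') (sub_nonneg.2 hle)]

/-- `Δ_{m,n}(ξ) = Δ_{m,n}(ξ')` implies that the corresponding terminal values of
the ranking tables agree. -/
theorem Delta_eq_imp_tau_eq (m n : ℕ) (hm : 1 ≤ m) (hn : 1 ≤ n) (hmn : 3 ≤ m + n)
    (ξ ξ' : ℝ) (hξ : 0 < ξ) (hξ' : 0 < ξ') (h : Delta m n ξ = Delta m n ξ') :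
    tau m n ξ m 1 = tau m n ξ' m 1 ∧ tau m n ξ 1 n = tau m n ξ' 1 n := by
  unfold Delta at h
  rcases le_total ξ ξ' with hle | hle
  · obtain ⟨h1, h2⟩ := tau_aux m n ξ ξ' hle
    omega
  · obtain ⟨h1, h2⟩ := tau_aux m n ξ' ξ hle
    omega
end

section
/- Let m ≥ 2 and n ≥ 1 be integers. Then Δ_{m,n}((m−1)/n) = m − 1. Moreover, there exists ε > 0 such that for all real h with 0 < h < ε, Δ_{m,n}((m−1)/n − h) = (m − 1) + (gcd(m−1, n) − 1). -/
open Finset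
open scoped Classical

/-!
Write `m = M + 1` and `ξ₀ = M / n`. Multiplying by `n`, the value `s + tξ₀` of a grid point
becomes the integer level `s n + t M`; the corner `(1, n)` has level `n (M + 1)` and `(m, 1)` has
level `n (M + 1) + M`. So `Δ(ξ₀)` counts the points with level in `(n (M + 1), n (M + 1) + M]`,
and there is exactly one for each `s ≥ 2`, since an interval of length `M` contains exactly one
multiple of `M`. For `ξ = ξ₀ - h` with `h > 0` small, the value of `(s, t)` drops by `t h`, so
grid points are ordered lexicographically by (level, `-t`): now also the points on the level of
`(1, n)` with `t < n` are counted. These are the solutions of `t M = n (M + 1 - s)` with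
`0 < t < n`, i.e. the multiples of `n / gcd(M, n)` in `(0, n)`, and there are `gcd(M, n) - 1`.
-/

lemma Nat.eq_div_add_one_iff {a M t : ℕ} (hM : 0 < M) :
    t = a / M + 1 ↔ a < t * M ∧ t * M ≤ a + M := by
  rcases t with _ | k
  · simp
  · rw [Nat.add_right_cancel_iff, eq_comm, Nat.div_eq_iff hM, add_mul, one_mul]
    omega

lemma Nat.dvd_mul_iff_div_gcd_dvd {n M : ℕ} (hn : 0 < n) (t : ℕ) :
    n ∣ t * M ↔ n / n.gcd M ∣ t := by
  have hd : 0 < n.gcd M := Nat.gcd_pos_of_pos_left M hn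
  have hcop := Nat.coprime_div_gcd_div_gcd hd
  set d := n.gcd M
  obtain ⟨b, hb⟩ : d ∣ n := Nat.gcd_dvd_left n M
  obtain ⟨a, ha⟩ : d ∣ M := Nat.gcd_dvd_right n M
  rw [Nat.div_eq_of_eq_mul_right hd hb, Nat.div_eq_of_eq_mul_right hd ha] at hcop
  rw [Nat.div_eq_of_eq_mul_right hd hb, ← hcop.dvd_mul_right, hb, ha, mul_left_comm,
    Nat.mul_dvd_mul_iff_left hd]

lemma Nat.sub_one_div_div_of_dvd {n d : ℕ} (hn : 0 < n) (hd : d ∣ n) :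
    (n - 1) / (n / d) = d - 1 := by
  obtain ⟨b, rfl⟩ := hd
  have hb : 0 < b := Nat.pos_of_mul_pos_left hn
  rw [Nat.mul_div_cancel_left b (Nat.pos_of_mul_pos_right hn), Nat.div_eq_iff hb, Nat.sub_one_mul]
  omega

lemma Int.cast_sub_lt_cast_sub_iff {A B : ℤ} {x y : ℝ} (hx₀ : 0 ≤ x) (hx₁ : x < 1)
    (hy₀ : 0 ≤ y) (hy₁ : y < 1) : (A : ℝ) - x < B - y ↔ A < B ∨ (A = B ∧ y < x) := by
  rcases lt_trichotomy A B with hAB | rfl | hAB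
  · have : (A : ℝ) + 1 ≤ B := by exact_mod_cast hAB
    simp only [hAB, true_or, iff_true]
    linarith
  · simp
  · have : (B : ℝ) + 1 ≤ A := by exact_mod_cast hAB
    simp only [hAB.not_gt, hAB.ne', false_or, false_and, iff_false, not_lt]
    linarith

lemma Delta_eq_card_window {m n : ℕ} {ξ : ℝ} (hξ : 1 + n * ξ ≤ m + ξ) :
    Delta m n ξ =
      #{p ∈ Icc 1 m ×ˢ Icc 1 n | 1 + n * ξ < p.1 + p.2 * ξ ∧ p.1 + p.2 * ξ ≤ m + ξ} := by
  have hsplit := card_filter_add_card_filter_not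
    (s := {p ∈ Icc 1 m ×ˢ Icc 1 n | (p.1 : ℝ) + p.2 * ξ ≤ m + ξ})
    (fun p => (p.1 : ℝ) + p.2 * ξ ≤ 1 + n * ξ)
  simp only [filter_filter, not_le] at hsplit
  have hlow : #{p ∈ Icc 1 m ×ˢ Icc 1 n | (p.1 : ℝ) + p.2 * ξ ≤ m + ξ ∧ p.1 + p.2 * ξ ≤ 1 + n * ξ}
      = tau m n ξ 1 n := by
    unfold tau
    refine congrArg card (filter_congr fun p _ => ?_)
    push_cast
    constructor
    · exact And.right
    · intro h; exact ⟨h.trans hξ, h⟩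
  have hup : tau m n ξ m 1 = #{p ∈ Icc 1 m ×ˢ Icc 1 n | (p.1 : ℝ) + p.2 * ξ ≤ m + ξ} := by
    simp [tau]
  rw [Delta, hup, ← hsplit, hlow]
  simp only [Nat.cast_add, add_sub_cancel_left, and_comm]

lemma window_div_sub_iff_level {M n s t : ℕ} (hn : 0 < n) {h : ℝ} (h₀ : 0 ≤ h)
    (hh : n * (n * h) < 1) (ht₁ : 1 ≤ t) (htn : t ≤ n) :
    (1 + n * (M / n - h) < s + t * (M / n - h) ∧ s + t * (M / n - h) ≤ (M + 1 : ℕ) + (M / n - h)) ↔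
      (n * (M + 1) < s * n + t * M ∧ s * n + t * M ≤ n * (M + 1) + M) ∨
        (s * n + t * M = n * (M + 1) ∧ t < n ∧ 0 < h) := by
  have hn' : (0 : ℝ) < n := by exact_mod_cast hn
  have hnh : 0 ≤ n * h := by positivity
  have hnh_le : n * h ≤ n * (n * h) := le_mul_of_one_le_left hnh (by exact_mod_cast hn)
  have ht₁' : (1 : ℝ) ≤ t := by exact_mod_cast ht₁
  have htnh : t * (n * h) ≤ n * (n * h) :=
    mul_le_mul_of_nonneg_right (by exact_mod_cast htn) hnh
  have e₁ : (n : ℝ) * (1 + n * (M / n - h)) = ((n * (M + 1) : ℕ) : ℤ) - n * (n * h) := by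
    push_cast; field_simp; ring
  have e₂ : (n : ℝ) * (s + t * (M / n - h)) = ((s * n + t * M : ℕ) : ℤ) - t * (n * h) := by
    push_cast; field_simp; ring
  have e₃ : (n : ℝ) * ((M + 1 : ℕ) + (M / n - h)) = ((n * (M + 1) + M : ℕ) : ℤ) - 1 * (n * h) := by
    push_cast; field_simp; ring
  have hlt : (t : ℝ) * (n * h) < n * (n * h) ↔ t < n ∧ 0 < h := by
    constructor
    · intro H
      have hpos : 0 < (n : ℝ) * h := by nlinarith
      exact ⟨by exact_mod_cast lt_of_mul_lt_mul_right H hnh, pos_of_mul_pos_right hpos hn'.le⟩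
    · rintro ⟨htn, hpos⟩
      exact mul_lt_mul_of_pos_right (by exact_mod_cast htn) (by positivity)
  have hge : ¬ (t : ℝ) * (n * h) < 1 * (n * h) := by nlinarith
  rw [← mul_lt_mul_iff_right₀ hn', ← mul_le_mul_iff_right₀ hn', e₁, e₂, e₃, ← not_lt,
    Int.cast_sub_lt_cast_sub_iff, Int.cast_sub_lt_cast_sub_iff]
  all_goals try first | positivity | linarith
  simp only [Nat.cast_lt, Nat.cast_inj, hlt, hge, and_false, or_false]
  by_cases hpos : 0 < h <;> simp only [hpos, and_true, and_false, or_false] <;> omega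

lemma Delta_div_sub_eq_card {M n : ℕ} (hn : 0 < n) {h : ℝ} (h₀ : 0 ≤ h) (hh : n * (n * h) < 1) :
    Delta (M + 1) n (M / n - h) =
      #{p ∈ Icc 1 (M + 1) ×ˢ Icc 1 n |
        (n * (M + 1) < p.1 * n + p.2 * M ∧ p.1 * n + p.2 * M ≤ n * (M + 1) + M) ∨
          (p.1 * n + p.2 * M = n * (M + 1) ∧ p.2 < n ∧ 0 < h)} := by
  have hh₁ : h ≤ n * h := le_mul_of_one_le_left h₀ (by exact_mod_cast hn)
  have hM : (n : ℝ) * (M / n) = M := mul_div_cancel₀ _ (by positivity)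
  rw [Delta_eq_card_window]
  · congr 2
    refine filter_congr fun p hp => ?_
    simp only [mem_product, mem_Icc] at hp
    exact window_div_sub_iff_level hn h₀ hh hp.2.1 hp.2.2
  · rw [mul_sub, hM]
    push_cast
    linarith [(by positivity : (0 : ℝ) ≤ M / n)]

lemma mem_strip_iff {M n s t : ℕ} (hM : 0 < M) (hn : 0 < n) (hs₁ : 1 ≤ s) (hs : s ≤ M + 1) :
    ((1 ≤ t ∧ t ≤ n) ∧ n * (M + 1) < s * n + t * M ∧ s * n + t * M ≤ n * (M + 1) + M) ↔
      2 ≤ s ∧ t = (M + 1 - s) * n / M + 1 := by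
  have ha : s * n + (M + 1 - s) * n = n * (M + 1) := by
    rw [← add_mul, Nat.add_sub_cancel' hs, mul_comm]
  have hlt : (M + 1 - s) * n / M < n ↔ 2 ≤ s := by
    rw [Nat.div_lt_iff_lt_mul hM, mul_comm n M, Nat.mul_lt_mul_right hn]
    omega
  generalize (M + 1 - s) * n = a at ha hlt ⊢
  have hcond : (n * (M + 1) < s * n + t * M ∧ s * n + t * M ≤ n * (M + 1) + M) ↔
      t = a / M + 1 := by
    rw [Nat.eq_div_add_one_iff hM]
    omega
  rw [hcond]
  constructor
  · rintro ⟨⟨-, htn⟩, rfl⟩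
    exact ⟨hlt.1 (by omega), rfl⟩
  · rintro ⟨hs₂, rfl⟩
    exact ⟨⟨Nat.le_add_left 1 _, hlt.2 hs₂⟩, rfl⟩

lemma card_strip {M n : ℕ} (hM : 0 < M) (hn : 0 < n) :
    #{p ∈ Icc 1 (M + 1) ×ˢ Icc 1 n |
      n * (M + 1) < p.1 * n + p.2 * M ∧ p.1 * n + p.2 * M ≤ n * (M + 1) + M} = M := by
  have hstrip : {p ∈ Icc 1 (M + 1) ×ˢ Icc 1 n |
      n * (M + 1) < p.1 * n + p.2 * M ∧ p.1 * n + p.2 * M ≤ n * (M + 1) + M} =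
      (Icc 2 (M + 1)).image fun s => (s, (M + 1 - s) * n / M + 1) := by
    ext ⟨s, t⟩
    simp only [mem_filter, mem_product, mem_Icc, mem_image, Prod.mk.injEq]
    constructor
    · rintro ⟨⟨⟨hs₁, hs⟩, ht⟩, hcond⟩
      obtain ⟨hs₂, rfl⟩ := (mem_strip_iff hM hn hs₁ hs).1 ⟨ht, hcond⟩
      exact ⟨s, ⟨hs₂, hs⟩, rfl, rfl⟩
    · rintro ⟨s, ⟨hs₂, hs⟩, rfl, rfl⟩
      obtain ⟨ht, hcond⟩ := (mem_strip_iff hM hn (by omega) hs).2 ⟨hs₂, rfl⟩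
      exact ⟨⟨⟨by omega, hs⟩, ht⟩, hcond⟩
  rw [hstrip, card_image_of_injective _ fun _ _ h => (Prod.mk.inj h).1, Nat.card_Icc]
  omega

lemma mem_line_iff {M n s t : ℕ} (hn : 0 < n) :
    ((1 ≤ s ∧ s ≤ M + 1) ∧ (1 ≤ t ∧ t ≤ n)) ∧ s * n + t * M = n * (M + 1) ∧ t < n ↔
      ((0 < t ∧ t ≤ n - 1) ∧ n / n.gcd M ∣ t) ∧ M + 1 - t * M / n = s := by
  rw [← Nat.dvd_mul_iff_div_gcd_dvd hn]
  constructor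
  · rintro ⟨⟨⟨hs₁, hs⟩, ht₁, -⟩, hline, htn⟩
    have htM : t * M = n * (M + 1 - s) := by
      rw [Nat.mul_sub, mul_comm n s]
      omega
    refine ⟨⟨⟨ht₁, by omega⟩, Dvd.intro _ htM.symm⟩, ?_⟩
    rw [htM, Nat.mul_div_cancel_left _ hn]
    omega
  · rintro ⟨⟨⟨ht₁, htn⟩, c, hc⟩, rfl⟩
    rw [hc, Nat.mul_div_cancel_left _ hn]
    have hcM : c ≤ M := by
      refine Nat.le_of_mul_le_mul_left ?_ hn
      rw [← hc]
      exact Nat.mul_le_mul_right M (by omega)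
    refine ⟨⟨⟨by omega, by omega⟩, ht₁, by omega⟩, ?_, by omega⟩
    rw [mul_comm n c, ← add_mul, Nat.sub_add_cancel (by omega), mul_comm]

lemma card_line {M n : ℕ} (hn : 0 < n) :
    #{p ∈ Icc 1 (M + 1) ×ˢ Icc 1 n | p.1 * n + p.2 * M = n * (M + 1) ∧ p.2 < n} =
      M.gcd n - 1 := by
  have hline : {p ∈ Icc 1 (M + 1) ×ˢ Icc 1 n | p.1 * n + p.2 * M = n * (M + 1) ∧ p.2 < n} =
      {t ∈ Ioc 0 (n - 1) | n / n.gcd M ∣ t}.image fun t => (M + 1 - t * M / n, t) := by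
    ext ⟨s, t⟩
    simp only [mem_filter, mem_product, mem_Icc, mem_Ioc, mem_image, Prod.mk.injEq]
    constructor
    · intro hst
      obtain ⟨ht, hs⟩ := (mem_line_iff hn).1 hst
      exact ⟨t, ht, hs, rfl⟩
    · rintro ⟨t, ht, rfl, rfl⟩
      exact (mem_line_iff hn).2 ⟨ht, rfl⟩
  rw [hline, card_image_of_injective _ fun _ _ h => (Prod.mk.inj h).2,
    Nat.Ioc_filter_dvd_card_eq_div, Nat.sub_one_div_div_of_dvd hn (Nat.gcd_dvd_left n M),
    Nat.gcd_comm]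

/-- `Δ_{m,n}((m−1)/n) = m − 1`, and just to the left of `(m−1)/n` the value is
`(m − 1) + (gcd(m−1,n) − 1)`. -/
theorem Delta_at_left_boundary (m n : ℕ) (hm : 2 ≤ m) (hn : 1 ≤ n) :
    Delta m n (((m : ℝ) - 1) / (n : ℝ)) = (m : ℤ) - 1 ∧
    ∃ ε : ℝ, 0 < ε ∧ ∀ h : ℝ, 0 < h → h < ε →
      Delta m n (((m : ℝ) - 1) / (n : ℝ) - h) =
        ((m : ℤ) - 1) + ((Nat.gcd (m - 1) n : ℤ) - 1) := by
  obtain ⟨M, rfl⟩ : ∃ M, m = M + 1 := ⟨m - 1, by omega⟩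
  have hM : 0 < M := by omega
  simp only [Nat.cast_add, Nat.cast_one, add_sub_cancel_right, Nat.add_sub_cancel]
  refine ⟨?_, 1 / (n * n), by positivity, fun h h₀ hε => ?_⟩
  · have hΔ₀ := Delta_div_sub_eq_card (M := M) hn le_rfl (by simp)
    simp only [sub_zero, lt_irrefl, and_false, or_false] at hΔ₀
    rw [hΔ₀, card_strip hM hn]
  · have hnh : n * (n * h) < 1 := by
      rw [lt_div_iff₀ (by positivity)] at hε
      linarith
    rw [Delta_div_sub_eq_card hn h₀.le hnh, filter_or, card_union_of_disjoint, card_strip hM hn]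
    · simp only [h₀, and_true]
      rw [card_line hn]
      push_cast [Nat.cast_sub (Nat.gcd_pos_of_pos_left n hM)]
      rfl
    · rw [disjoint_filter]
      rintro p - ⟨hlt, -⟩ ⟨heq, -⟩
      omega
end

section
/- Let m ≥ 1 and n ≥ 2 be integers. Then Δ_{m,n}(m/(n−1)) = 1 − n. Moreover, there exists ε > 0 such that for all real h with 0 < h < ε, Δ_{m,n}(m/(n−1) + h) = (1 − n) − (gcd(m, n−1) − 1). -/
open Finset
open scoped Classical

/-! Count column by column: `Δ_{m,n}(ξ)` is the sum over `t ∈ [n]` of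
`min(m, ⌊m + (1 - t)ξ⌋) - min(m, ⌊1 + (n - t)ξ⌋)`. At `ξ = m/(n-1) + h` these floors are taken
at `a_t - (t-1)h` and `a_t + 1 + (n-t)h`, where `a_t = m(n-t)/(n-1)`. The column `t = 1`
contributes `0`. For small `h ≥ 0` every other column contributes `-1`, except that for `h > 0`
the first floor drops by one more when `a_t` is a positive integer, i.e. when `n - 1 ∣ m(n-t)`
with `t < n`; there are `gcd(m, n-1) - 1` such columns. -/

lemma card_filter_natCast_le (m : ℕ) (c : ℝ) :
    #{s ∈ Icc 1 m | ((s : ℕ) : ℝ) ≤ c} = min m ⌊c⌋₊ := by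
  have hset : {s ∈ Icc 1 m | ((s : ℕ) : ℝ) ≤ c} = Icc 1 (min m ⌊c⌋₊) := by
    ext s
    simp only [mem_filter, mem_Icc, le_min_iff]
    constructor
    · rintro ⟨⟨h1, h2⟩, h3⟩
      exact ⟨h1, h2, (Nat.le_floor_iff' (by omega)).mpr h3⟩
    · rintro ⟨h1, h2, h3⟩
      exact ⟨⟨h1, h2⟩, (Nat.le_floor_iff' (by omega)).mp h3⟩
  rw [hset, Nat.card_Icc, Nat.add_sub_cancel]

lemma tau_eq_sum_min_floor (m n : ℕ) (ξ : ℝ) (i j : ℕ) :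
    tau m n ξ i j = ∑ t ∈ Icc 1 n, min m ⌊(i : ℝ) + ((j : ℝ) - t) * ξ⌋₊ := by
  rw [tau, card_filter, sum_product, sum_comm]
  refine sum_congr rfl fun t _ => ?_
  rw [← card_filter_natCast_le m ((i : ℝ) + ((j : ℝ) - t) * ξ), card_filter]
  refine sum_congr rfl fun s _ => if_congr ?_ rfl rfl
  constructor <;> intro H <;> linarith

noncomputable def deltaColumn (m n : ℕ) (ξ : ℝ) (t : ℕ) : ℤ :=
  (min m ⌊(m : ℝ) + (1 - t) * ξ⌋₊ : ℕ) - (min m ⌊1 + ((n : ℝ) - t) * ξ⌋₊ : ℕ)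

lemma Delta_eq_sum_deltaColumn (m n : ℕ) (ξ : ℝ) :
    Delta m n ξ = ∑ t ∈ Icc 1 n, deltaColumn m n ξ t := by
  simp only [Delta, tau_eq_sum_min_floor, deltaColumn, Nat.cast_sum, ← sum_sub_distrib,
    Nat.cast_one]

lemma deltaColumn_one {m n : ℕ} {ξ : ℝ} (h : (m : ℝ) ≤ 1 + (n - 1) * ξ) :
    deltaColumn m n ξ 1 = 0 := by
  rw [deltaColumn, Nat.cast_one, min_eq_left (Nat.le_floor h)]
  simp

lemma floor_natCast_div_add {a γ : ℕ} (hγ : 0 < γ) {δ : ℝ} (hδ₀ : 0 ≤ δ) (hδ₁ : γ * δ < 1) :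
    ⌊(a : ℝ) / γ + δ⌋₊ = a / γ := by
  have hγR : (0 : ℝ) < γ := by exact_mod_cast hγ
  have hlt : (a : ℝ) + 1 ≤ γ * (a / γ : ℕ) + γ := by
    exact_mod_cast (show a + 1 ≤ γ * (a / γ) + γ by
      have := Nat.lt_div_mul_add (a := a) hγ; rw [mul_comm]; omega)
  rw [Nat.floor_eq_iff (by positivity)]
  constructor
  · exact Nat.cast_div_le.trans (le_add_of_nonneg_right hδ₀)
  · rw [div_add' _ _ _ hγR.ne', div_lt_iff₀ hγR]
    linarith

lemma floor_natCast_div_sub {a γ : ℕ} (hγ : 0 < γ) {δ : ℝ} (hδ₀ : 0 ≤ δ) (hδ₁ : γ * δ < 1) :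
    ⌊(a : ℝ) / γ - δ⌋₊ = if 0 < δ ∧ γ ∣ a then a / γ - 1 else a / γ := by
  have hγR : (1 : ℝ) ≤ γ := by exact_mod_cast hγ
  have hδ_lt_one : δ < 1 := by nlinarith
  split_ifs with hcase
  · obtain ⟨hδ, c, rfl⟩ := hcase
    rw [Nat.mul_div_cancel_left _ hγ, Nat.cast_mul, mul_div_cancel_left₀ _ (by positivity)]
    rcases Nat.eq_zero_or_pos c with rfl | hc
    -- here the value `0 - 1` is the truncated subtraction `0` of `ℕ`
    · exact Nat.floor_of_nonpos (by simp [hδ.le])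
    · have hcR : (1 : ℝ) ≤ c := by exact_mod_cast hc
      rw [Nat.floor_eq_iff (by linarith), Nat.cast_sub hc]
      push_cast
      constructor <;> nlinarith
  · rcases hδ₀.eq_or_lt with rfl | hδ
    · rw [sub_zero, Nat.floor_div_eq_div]
    have hrem : γ * (a / γ) + 1 ≤ a := by
      have := Nat.div_add_mod a γ
      have := (Nat.dvd_iff_mod_eq_zero).not.mp (fun h => hcase ⟨hδ, h⟩)
      omega
    have hremR : (γ : ℝ) * (a / γ : ℕ) + 1 ≤ a := by exact_mod_cast hrem
    refine le_antisymm ?_ (Nat.le_floor ?_)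
    · exact (Nat.floor_le_floor (by linarith)).trans (Nat.floor_div_eq_div a γ).le
    · rw [le_sub_iff_add_le, le_div_iff₀ (by positivity)]
      nlinarith

lemma deltaColumn_eq {m n t : ℕ} (hm : 1 ≤ m) (ht : t ∈ Icc 2 n) {h : ℝ} (h₀ : 0 ≤ h)
    (h₁ : ((n : ℝ) - 1) ^ 2 * h < 1) :
    deltaColumn m n (m / ((n : ℝ) - 1) + h) t =
      -1 - if 0 < h ∧ n - 1 ∣ m * (n - t) ∧ t ≠ n then 1 else 0 := by
  obtain ⟨ht₂, htn⟩ := mem_Icc.mp ht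
  have hγ : 0 < n - 1 := by omega
  have hγR : ((n - 1 : ℕ) : ℝ) = n - 1 := by rw [Nat.cast_sub (by omega), Nat.cast_one]
  have hγ0 : (n : ℝ) - 1 ≠ 0 := by rw [← hγR]; exact_mod_cast hγ.ne'
  have htR : (2 : ℝ) ≤ t := by exact_mod_cast ht₂
  have htnR : (t : ℝ) ≤ n := by exact_mod_cast htn
  have hlow : (m : ℝ) + (1 - t) * (m / ((n : ℝ) - 1) + h) =
      ((m * (n - t) : ℕ) : ℝ) / (n - 1 : ℕ) - (t - 1) * h := by
    rw [hγR]
    push_cast [Nat.cast_sub htn]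
    field_simp
    ring
  have hupp : 1 + ((n : ℝ) - t) * (m / ((n : ℝ) - 1) + h) =
      ((m * (n - t) : ℕ) : ℝ) / (n - 1 : ℕ) + (n - t : ℕ) * h + 1 := by
    rw [hγR]
    push_cast [Nat.cast_sub htn]
    field_simp
    ring
  have hδ₁ : ((n - 1 : ℕ) : ℝ) * ((t - 1) * h) < 1 := by
    rw [hγR]; nlinarith
  have hδ₂ : ((n - 1 : ℕ) : ℝ) * ((n - t : ℕ) * h) < 1 := by
    rw [hγR, Nat.cast_sub htn]; nlinarith
  have hq : m * (n - t) / (n - 1) < m :=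
    Nat.div_lt_of_lt_mul <| by
      rw [mul_comm (n - 1)]; exact Nat.mul_lt_mul_of_pos_left (by omega) (by omega)
  have hδ_pos : 0 < ((t : ℝ) - 1) * h ↔ 0 < h := by
    constructor <;> intro H <;> nlinarith
  have hq_pos : n - 1 ∣ m * (n - t) → t ≠ n → 0 < m * (n - t) / (n - 1) := fun hdvd htn' =>
    Nat.div_pos (Nat.le_of_dvd (Nat.mul_pos (by omega) (by omega)) hdvd) hγ
  have hq_zero : t = n → m * (n - t) / (n - 1) = 0 := by
    rintro rfl; simp
  rw [deltaColumn, hlow, hupp, Nat.floor_add_one (by positivity), floor_natCast_div_add hγ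
    (by positivity) hδ₂, floor_natCast_div_sub hγ (by nlinarith) hδ₁,
    min_eq_right (by split_ifs <;> omega), min_eq_right hq]
  simp only [hδ_pos]
  split_ifs with H₁ H₂ H₂'
  · have := hq_pos H₁.2 H₂.2.2; omega
  · have := hq_zero (by_contra fun h' => H₂ ⟨H₁.1, H₁.2, h'⟩); omega
  · exact absurd ⟨H₂'.1, H₂'.2.1⟩ H₁
  · omega

lemma dvd_mul_iff_div_gcd_dvd {m γ : ℕ} (hγ : 0 < γ) (k : ℕ) :
    γ ∣ m * k ↔ γ / Nat.gcd m γ ∣ k := by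
  obtain ⟨m', γ', hcop, hm, hγ'⟩ := Nat.exists_coprime m γ
  set g := Nat.gcd m γ
  have hg : 0 < g := Nat.gcd_pos_of_pos_right m hγ
  clear_value g
  rw [hm, hγ', Nat.mul_div_cancel _ hg, mul_right_comm, Nat.mul_dvd_mul_iff_right hg,
    hcop.symm.dvd_mul_left]

lemma Ioo_filter_dvd_mul_card {γ : ℕ} (hγ : 0 < γ) (m : ℕ) :
    #{k ∈ Ioo 0 γ | γ ∣ m * k} = Nat.gcd m γ - 1 := by
  have hIoc : #{k ∈ Ioc 0 γ | γ ∣ m * k} = Nat.gcd m γ := by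
    simp_rw [dvd_mul_iff_div_gcd_dvd hγ]
    rw [Nat.Ioc_filter_dvd_card_eq_div, Nat.div_div_self (Nat.gcd_dvd_right m γ) hγ.ne']
  rw [← Ioo_insert_right hγ, filter_insert, if_pos (dvd_mul_left γ m),
    card_insert_of_notMem (by simp)] at hIoc
  omega

lemma Icc_filter_dvd_mul_sub_card (m : ℕ) {n : ℕ} (hn : 2 ≤ n) :
    #{t ∈ Icc 2 n | n - 1 ∣ m * (n - t) ∧ t ≠ n} = Nat.gcd m (n - 1) - 1 := by
  rw [← Ioo_filter_dvd_mul_card (by omega : 0 < n - 1) m]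
  refine card_nbij' (n - ·) (n - ·) ?_ ?_ ?_ ?_ <;> intro t ht <;>
    simp only [coe_filter, mem_Icc, mem_Ioo, Set.mem_ofPred_eq] at ht ⊢
  · exact ⟨by omega, ht.2.1⟩
  · exact ⟨by omega, by rw [Nat.sub_sub_self (by omega)]; exact ht.2, by omega⟩
  · omega
  · omega

lemma Delta_div_sub_one_add (m n : ℕ) (hm : 1 ≤ m) (hn : 2 ≤ n) {h : ℝ} (h₀ : 0 ≤ h)
    (h₁ : ((n : ℝ) - 1) ^ 2 * h < 1) :
    Delta m n (m / ((n : ℝ) - 1) + h) =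
      1 - n - if 0 < h then (Nat.gcd m (n - 1) : ℤ) - 1 else 0 := by
  have hγ : (1 : ℝ) < n := by exact_mod_cast hn
  have hcol₁ : deltaColumn m n (m / ((n : ℝ) - 1) + h) 1 = 0 := by
    apply deltaColumn_one
    rw [mul_add, mul_div_cancel₀ _ (by linarith)]
    nlinarith
  have hIcc : Icc 1 n = insert 1 (Icc 2 n) := (insert_Icc_add_one_left_eq_Icc (by omega)).symm
  rw [Delta_eq_sum_deltaColumn, hIcc, sum_insert (by simp),
    hcol₁, zero_add, sum_congr rfl fun t ht => deltaColumn_eq hm ht h₀ h₁, sum_sub_distrib,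
    sum_const, Nat.card_Icc, sum_boole]
  by_cases hpos : 0 < h
  · have hg : 1 ≤ Nat.gcd m (n - 1) := Nat.gcd_pos_of_pos_left _ hm
    simp only [hpos, true_and, if_true, Icc_filter_dvd_mul_sub_card m hn, smul_neg, nsmul_one]
    omega
  · simp [hpos]
    omega

/-- `Δ_{m,n}(m/(n−1)) = 1 − n`, and just to the right of `m/(n−1)` the value is
`(1 − n) − (gcd(m,n−1) − 1)`. -/
theorem Delta_at_right_boundary (m n : ℕ) (hm : 1 ≤ m) (hn : 2 ≤ n) :
    Delta m n ((m : ℝ) / ((n : ℝ) - 1)) = 1 - (n : ℤ) ∧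
    ∃ ε : ℝ, 0 < ε ∧ ∀ h : ℝ, 0 < h → h < ε →
      Delta m n ((m : ℝ) / ((n : ℝ) - 1) + h) =
        (1 - (n : ℤ)) - ((Nat.gcd m (n - 1) : ℤ) - 1) := by
  have hγ : (0 : ℝ) < (n : ℝ) - 1 := by
    have : (2 : ℝ) ≤ n := by exact_mod_cast hn
    linarith
  refine ⟨by simpa using Delta_div_sub_one_add m n hm hn le_rfl (by simp),
    1 / ((n : ℝ) - 1) ^ 2, by positivity, fun h h₀ hε => ?_⟩
  rw [lt_div_iff₀ (by positivity), mul_comm] at hε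
  rw [Delta_div_sub_one_add m n hm hn h₀.le hε, if_pos h₀]
end

section
/- Let m ≥ 1 and n ≥ 2 be integers and let ξ be a real number with 0 < ξ < m/(n−1). Then Δ_{m+1,n}(ξ) − Δ_{m,n}(ξ) = n. -/
open Finset
open scoped Classical

/-- for `0 < ξ < m/(n−1)` it holds that `Δ_{m+1,n}(ξ) − Δ_{m,n}(ξ) = n`. -/
theorem Delta_succ_sub (m n : ℕ) (hm : 1 ≤ m) (hn : 2 ≤ n)
    (ξ : ℝ) (h0 : 0 < ξ) (h1 : ξ < (m : ℝ) / ((n : ℝ) - 1)) :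
    Delta (m + 1) n ξ - Delta m n ξ = (n : ℤ) := by
  have hn1 : (0:ℝ) < (n:ℝ) - 1 := by
    have : (2:ℝ) ≤ (n:ℝ) := by exact_mod_cast hn
    linarith
  have hxm : ξ * ((n:ℝ) - 1) < m := (lt_div_iff₀ hn1).mp h1
  -- Part B
  have hB : tau (m+1) n ξ 1 n = tau m n ξ 1 n := by
    unfold tau
    congr 1
    ext ⟨s, t⟩
    simp only [Finset.mem_filter, Finset.mem_product, Finset.mem_Icc]
    constructor
    · rintro ⟨⟨⟨hs1, hs2⟩, ht1, ht2⟩, hle⟩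
      refine ⟨⟨⟨hs1, ?_⟩, ht1, ht2⟩, hle⟩
      by_contra hsm
      push_neg at hsm
      have hs : (m:ℝ) + 1 ≤ (s:ℝ) := by exact_mod_cast hsm
      have ht : (1:ℝ) ≤ (t:ℝ) := by exact_mod_cast ht1
      have htn : (t:ℝ) ≤ (n:ℝ) := by exact_mod_cast ht2
      push_cast at hle
      nlinarith
    · rintro ⟨⟨⟨hs1, hs2⟩, ht⟩, hle⟩
      exact ⟨⟨⟨hs1, hs2.trans (Nat.le_succ m)⟩, ht⟩, hle⟩
  -- Part A
  have hA : tau (m+1) n ξ (m+1) 1 = tau m n ξ m 1 + n := by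
    unfold tau
    have key : ((Finset.Icc 1 (m+1) ×ˢ Finset.Icc 1 n).filter
        (fun p => (p.1 : ℝ) + (p.2 : ℝ) * ξ ≤ ((m+1 : ℕ) : ℝ) + ((1:ℕ) : ℝ) * ξ))
        = (((Finset.Icc 1 m ×ˢ Finset.Icc 1 n).filter
            (fun p => (p.1 : ℝ) + (p.2 : ℝ) * ξ ≤ ((m : ℕ) : ℝ) + ((1:ℕ) : ℝ) * ξ))
          ∪ (({0} : Finset ℕ) ×ˢ Finset.Icc 1 n)).image (fun p => (p.1 + 1, p.2)) := by
      ext ⟨s, t⟩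
      simp only [Finset.mem_image, Finset.mem_union, Finset.mem_filter, Finset.mem_product,
        Finset.mem_Icc, Finset.mem_singleton, Prod.mk.injEq, Prod.exists]
      constructor
      · rintro ⟨⟨⟨hs1, hs2⟩, ht1, ht2⟩, hle⟩
        obtain ⟨s', rfl⟩ : ∃ s', s = s' + 1 := ⟨s - 1, (Nat.succ_pred_eq_of_pos hs1).symm⟩
        refine ⟨s', t, ?_, rfl, rfl⟩
        rcases Nat.eq_zero_or_pos s' with h0' | h1'
        · exact Or.inr ⟨h0', ht1, ht2⟩
        · refine Or.inl ⟨⟨⟨h1', by omega⟩, ht1, ht2⟩, ?_⟩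
          push_cast at hle ⊢
          linarith
      · rintro ⟨s', t', h, rfl, rfl⟩
        rcases h with ⟨⟨⟨hs1, hs2⟩, ht1, ht2⟩, hle⟩ | ⟨h0', ht1, ht2⟩
        · refine ⟨⟨⟨by omega, by omega⟩, ht1, ht2⟩, ?_⟩
          push_cast at hle ⊢
          linarith
        · subst h0'
          refine ⟨⟨⟨by omega, by omega⟩, ht1, ht2⟩, ?_⟩
          push_cast
          have ht : (1:ℝ) ≤ (t':ℝ) := by exact_mod_cast ht1
          have htn : (t':ℝ) ≤ (n:ℝ) := by exact_mod_cast ht2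
          nlinarith
    rw [key]
    rw [Finset.card_image_of_injective _ (by
      intro p q hpq
      simp only [Prod.mk.injEq] at hpq
      exact Prod.ext (by omega) hpq.2)]
    rw [Finset.card_union_of_disjoint, Finset.card_product, Finset.card_singleton,
      Nat.card_Icc]
    · simp
    · rw [Finset.disjoint_left]
      rintro ⟨s, t⟩ hmem hmem'
      simp only [Finset.mem_filter, Finset.mem_product, Finset.mem_Icc,
        Finset.mem_singleton] at hmem hmem'
      omega
  unfold Delta
  rw [hA, hB]
  push_cast
  ring
end

section
/- Let m and n be positive integers and let (a,b) ∈ G^{int}_{m,n}. Then (b⁻¹, a⁻¹) ∈ G^{int}_{n,m} (with the convention 0⁻¹ = ∞ and ∞⁻¹ = 0), and the map V commutes with this transposition in the following sense: (i) if V_{m,n}(a,b) = (a*,b*) ∈ G^{int}_{m−1,n} (the cases b < m/n or b = m/n), then V_{n,m}(b⁻¹,a⁻¹) = (b*⁻¹, a*⁻¹) and it lies in G^{int}_{n,m−1}; (ii) if V_{m,n}(a,b) = (a*,b*) ∈ G^{int}_{m,n−1} (the cases a = m/n or a > m/n), then V_{n,m}(b⁻¹,a⁻¹) = (b*⁻¹,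 a*⁻¹) and it lies in G^{int}_{n−1,m}. -/
open Finset
open scoped Classical
open scoped ENNReal

/-- The generalized-Farey fraction set `G_{m,n} ⊆ [0,∞]`:
`{0,∞}` together with all `p/q` for `p ∈ [m]`, `q ∈ [n]`
(when `mn = 0` the latter set is empty). -/
def Gset (m n : ℕ) : Set ℝ≥0∞ :=
  {0, ⊤} ∪ {x | ∃ p ∈ Finset.Icc 1 m, ∃ q ∈ Finset.Icc 1 n, x = (p : ℝ≥0∞) / (q : ℝ≥0∞)}

/-- The generalized Farey intervals of order `(m,n)`: pairs of adjacent elements of `G_{m,n}`. -/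
def GInt (m n : ℕ) : Set (ℝ≥0∞ × ℝ≥0∞) :=
  {ab | ab.1 ∈ Gset m n ∧ ab.2 ∈ Gset m n ∧ ab.1 < ab.2 ∧
    ∀ c ∈ Gset m n, ¬(ab.1 < c ∧ c < ab.2)}

/-- The parent map `V_{m,n}` on generalized Farey intervals. -/
noncomputable def Vmap (m n : ℕ) (ab : ℝ≥0∞ × ℝ≥0∞) : ℝ≥0∞ × ℝ≥0∞ :=
  if ab.2 < (m : ℝ≥0∞) / (n : ℝ≥0∞) then ab
  else if ab.2 = (m : ℝ≥0∞) / (n : ℝ≥0∞) then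
    (ab.1, sInf {c ∈ Gset (m - 1) n | ab.1 < c})
  else if ab.1 = (m : ℝ≥0∞) / (n : ℝ≥0∞) then
    (sSup {c ∈ Gset m (n - 1) | c < ab.2}, ab.2)
  else ab

lemma mem_Gset {m n : ℕ} {x : ℝ≥0∞} :
    x ∈ Gset m n ↔ x = 0 ∨ x = ⊤ ∨
      ∃ p ∈ Finset.Icc 1 m, ∃ q ∈ Finset.Icc 1 n, x = (p : ℝ≥0∞) / (q : ℝ≥0∞) := by
  simp [Gset, Set.mem_union, Set.mem_insert_iff, or_assoc]

lemma zero_mem_Gset (m n : ℕ) : (0 : ℝ≥0∞) ∈ Gset m n := Or.inl (Or.inl rfl)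
lemma top_mem_Gset (m n : ℕ) : (⊤ : ℝ≥0∞) ∈ Gset m n := Or.inl (Or.inr rfl)

lemma Gset_finite (m n : ℕ) : (Gset m n).Finite := by
  apply Set.Finite.union ((Set.finite_singleton (⊤:ℝ≥0∞)).insert 0)
  have h : {x : ℝ≥0∞ | ∃ p ∈ Finset.Icc 1 m, ∃ q ∈ Finset.Icc 1 n, x = (p : ℝ≥0∞) / q}
      ⊆ (fun pq : ℕ × ℕ => (pq.1 : ℝ≥0∞) / pq.2) '' ↑(Finset.Icc 1 m ×ˢ Finset.Icc 1 n) := by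
    rintro x ⟨p, hp, q, hq, rfl⟩
    exact ⟨(p, q), Finset.mem_coe.mpr (Finset.mem_product.mpr ⟨hp, hq⟩), rfl⟩
  exact ((Finset.Icc 1 m ×ˢ Finset.Icc 1 n).finite_toSet.image _).subset h

lemma Gset_subset {m m' n n' : ℕ} (hm : m ≤ m') (hn : n ≤ n') : Gset m n ⊆ Gset m' n' := by
  intro x hx
  rcases mem_Gset.mp hx with rfl | rfl | ⟨p, hp, q, hq, rfl⟩
  · exact zero_mem_Gset _ _
  · exact top_mem_Gset _ _
  · simp only [Finset.mem_Icc] at hp hq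
    exact mem_Gset.mpr (Or.inr (Or.inr ⟨p, Finset.mem_Icc.mpr ⟨hp.1, hp.2.trans hm⟩,
      q, Finset.mem_Icc.mpr ⟨hq.1, hq.2.trans hn⟩, rfl⟩))

lemma inv_mem_Gset {m n : ℕ} {x : ℝ≥0∞} (h : x ∈ Gset m n) : x⁻¹ ∈ Gset n m := by
  rcases mem_Gset.mp h with rfl | rfl | ⟨p, hp, q, hq, rfl⟩
  · simpa using top_mem_Gset n m
  · simpa using zero_mem_Gset n m
  · simp only [Finset.mem_Icc] at hp hq
    refine mem_Gset.mpr (Or.inr (Or.inr ⟨q, Finset.mem_Icc.mpr hq, p, Finset.mem_Icc.mpr hp, ?_⟩))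
    rw [ENNReal.inv_div (Or.inl (ENNReal.natCast_ne_top q))
      (Or.inl (Nat.cast_ne_zero.mpr (by omega)))]

lemma mem_Gset_of_lt {m n : ℕ} {x : ℝ≥0∞} (hx : x ∈ Gset m n)
    (h : x < (m : ℝ≥0∞) / n) : x ∈ Gset (m - 1) n := by
  rcases mem_Gset.mp hx with rfl | rfl | ⟨p, hp, q, hq, rfl⟩
  · exact zero_mem_Gset _ _
  · exact absurd h (not_top_lt)
  · simp only [Finset.mem_Icc] at hp hq
    have hpm : p ≤ m - 1 := by
      by_contra hc
      have : p = m := by omega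
      subst this
      exact absurd h (not_lt.mpr (ENNReal.div_le_div le_rfl (Nat.cast_le.mpr hq.2)))
    exact mem_Gset.mpr (Or.inr (Or.inr ⟨p, Finset.mem_Icc.mpr ⟨hp.1, hpm⟩,
      q, Finset.mem_Icc.mpr hq, rfl⟩))

lemma mem_Gset_of_gt {m n : ℕ} {x : ℝ≥0∞} (hx : x ∈ Gset m n)
    (h : (m : ℝ≥0∞) / n < x) : x ∈ Gset m (n - 1) := by
  rcases mem_Gset.mp hx with rfl | rfl | ⟨p, hp, q, hq, rfl⟩
  · exact absurd h (by simp)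
  · exact top_mem_Gset _ _
  · simp only [Finset.mem_Icc] at hp hq
    have hqn : q ≤ n - 1 := by
      by_contra hc
      have : q = n := by omega
      subst this
      exact absurd h (not_lt.mpr (ENNReal.div_le_div (Nat.cast_le.mpr hp.2) le_rfl))
    exact mem_Gset.mpr (Or.inr (Or.inr ⟨p, Finset.mem_Icc.mpr hp,
      q, Finset.mem_Icc.mpr ⟨hq.1, hqn⟩, rfl⟩))

lemma GInt_transpose {m n : ℕ} {a b : ℝ≥0∞} (h : (a, b) ∈ GInt m n) :
    (b⁻¹, a⁻¹) ∈ GInt n m := by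
  obtain ⟨ha, hb, hlt, hbtw⟩ := h
  refine ⟨inv_mem_Gset hb, inv_mem_Gset ha, ENNReal.inv_lt_inv.mpr hlt, ?_⟩
  rintro c hc ⟨h1, h2⟩
  refine hbtw c⁻¹ (inv_mem_Gset hc) ⟨?_, ?_⟩
  · have := ENNReal.inv_lt_inv.mpr h2
    rwa [inv_inv] at this
  · have := ENNReal.inv_lt_inv.mpr h1
    rwa [inv_inv] at this

lemma sInf_inv_eq {m n : ℕ} {t : ℝ≥0∞} (ht : t ≠ ⊤) :
    (sInf {c ∈ Gset m n | t < c})⁻¹ = sSup {c ∈ Gset n m | c < t⁻¹} := by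
  have hne : {c ∈ Gset m n | t < c}.Nonempty := ⟨⊤, top_mem_Gset m n, lt_top_iff_ne_top.mpr ht⟩
  have hfin : {c ∈ Gset m n | t < c}.Finite := (Gset_finite m n).subset fun x hx => hx.1
  have hmem := hne.csInf_mem hfin
  refine le_antisymm (le_sSup ⟨inv_mem_Gset hmem.1, ENNReal.inv_lt_inv.mpr hmem.2⟩) (sSup_le ?_)
  rintro c ⟨hc, hct⟩
  have h1 : t < c⁻¹ := by
    have := ENNReal.inv_lt_inv.mpr hct
    rwa [inv_inv] at this
  have h2 : sInf {c ∈ Gset m n | t < c} ≤ c⁻¹ := sInf_le ⟨inv_mem_Gset hc, h1⟩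
  have := ENNReal.inv_le_inv.mpr h2
  rwa [inv_inv] at this

lemma sInf_mem_interval {m n : ℕ} {t : ℝ≥0∞} (ht : t ≠ ⊤) :
    sInf {c ∈ Gset m n | t < c} ∈ {c ∈ Gset m n | t < c} := by
  have hne : {c ∈ Gset m n | t < c}.Nonempty := ⟨⊤, top_mem_Gset m n, lt_top_iff_ne_top.mpr ht⟩
  exact hne.csInf_mem ((Gset_finite m n).subset fun x hx => hx.1)

lemma sSup_mem_interval {m n : ℕ} {t : ℝ≥0∞} (ht : t ≠ 0) :
    sSup {c ∈ Gset m n | c < t} ∈ {c ∈ Gset m n | c < t} := by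
  have hne : {c ∈ Gset m n | c < t}.Nonempty := ⟨0, zero_mem_Gset m n, pos_iff_ne_zero.mpr ht⟩
  exact hne.csSup_mem ((Gset_finite m n).subset fun x hx => hx.1)


/-- the transposition `(a,b) ↦ (b⁻¹,a⁻¹)` of generalized Farey intervals
commutes with the parent map `V`. -/
theorem Vmap_transpose_commutes (m n : ℕ) (hm : 1 ≤ m) (hn : 1 ≤ n)
    (a b : ℝ≥0∞) (hab : (a, b) ∈ GInt m n) :
    (b⁻¹, a⁻¹) ∈ GInt n m ∧
    (b ≤ (m : ℝ≥0∞) / (n : ℝ≥0∞) →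
      Vmap m n (a, b) ∈ GInt (m - 1) n ∧
      Vmap n m (b⁻¹, a⁻¹) = ((Vmap m n (a, b)).2⁻¹, (Vmap m n (a, b)).1⁻¹) ∧
      Vmap n m (b⁻¹, a⁻¹) ∈ GInt n (m - 1)) ∧
    ((m : ℝ≥0∞) / (n : ℝ≥0∞) ≤ a →
      Vmap m n (a, b) ∈ GInt m (n - 1) ∧
      Vmap n m (b⁻¹, a⁻¹) = ((Vmap m n (a, b)).2⁻¹, (Vmap m n (a, b)).1⁻¹) ∧
      Vmap n m (b⁻¹, a⁻¹) ∈ GInt (n - 1) m) := by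
  obtain ⟨ha, hb, hlt, hbtw⟩ := hab
  have hmn_pos : (0 : ℝ≥0∞) < (m : ℝ≥0∞) / n :=
    ENNReal.div_pos (Nat.cast_ne_zero.mpr (by omega)) (ENNReal.natCast_ne_top n)
  have hinv : ((m : ℝ≥0∞) / n)⁻¹ = (n : ℝ≥0∞) / m :=
    ENNReal.inv_div (Or.inl (ENNReal.natCast_ne_top n)) (Or.inl (Nat.cast_ne_zero.mpr (by omega)))
  refine ⟨GInt_transpose ⟨ha, hb, hlt, hbtw⟩, ?_, ?_⟩
  · intro hble
    rcases lt_or_eq_of_le hble with hblt | hbeq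
    · -- b < m/n
      have haG : a ∈ Gset (m - 1) n := mem_Gset_of_lt ha (hlt.trans hblt)
      have hbG : b ∈ Gset (m - 1) n := mem_Gset_of_lt hb hblt
      have hmem' : (a, b) ∈ GInt (m - 1) n :=
        ⟨haG, hbG, hlt, fun c hc => hbtw c (Gset_subset (Nat.sub_le m 1) le_rfl hc)⟩
      have hV : Vmap m n (a, b) = (a, b) := by
        simp only [Vmap]; rw [if_pos hblt]
      have h1 : (n : ℝ≥0∞) / m < b⁻¹ := by
        rw [← hinv]; exact ENNReal.inv_lt_inv.mpr hblt
      have h2 : (n : ℝ≥0∞) / m < a⁻¹ := h1.trans (ENNReal.inv_lt_inv.mpr hlt)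
      have hV' : Vmap n m (b⁻¹, a⁻¹) = (b⁻¹, a⁻¹) := by
        simp only [Vmap]
        rw [if_neg (not_lt.mpr h2.le), if_neg h2.ne', if_neg h1.ne']
      exact ⟨by rw [hV]; exact hmem', by rw [hV, hV'],
        by rw [hV']; exact GInt_transpose hmem'⟩
    · -- b = m/n
      have ha_lt : a < (m : ℝ≥0∞) / n := hbeq ▸ hlt
      have haG : a ∈ Gset (m - 1) n := mem_Gset_of_lt ha ha_lt
      set c₀ := sInf {c ∈ Gset (m - 1) n | a < c} with hc0
      have hc0mem := sInf_mem_interval (m := m - 1) (n := n) (t := a) (ne_top_of_lt hlt)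
      rw [← hc0] at hc0mem
      have hV : Vmap m n (a, b) = (a, c₀) := by
        simp only [Vmap]
        rw [if_neg (by rw [hbeq]; exact lt_irrefl _), if_pos hbeq, ← hc0]
      have hmem' : (a, c₀) ∈ GInt (m - 1) n := by
        refine ⟨haG, hc0mem.1, hc0mem.2, ?_⟩
        rintro c hc ⟨h1, h2⟩
        exact absurd (sInf_le (Set.mem_sep hc h1)) (not_le.mpr h2)
      have hainv : (n : ℝ≥0∞) / m < a⁻¹ := by
        rw [← hinv]; exact ENNReal.inv_lt_inv.mpr ha_lt
      have hbinv : b⁻¹ = (n : ℝ≥0∞) / m := by rw [hbeq, hinv]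
      have hV' : Vmap n m (b⁻¹, a⁻¹) = (sSup {c ∈ Gset n (m - 1) | c < a⁻¹}, a⁻¹) := by
        simp only [Vmap]
        rw [if_neg (not_lt.mpr hainv.le), if_neg hainv.ne', if_pos hbinv]
      have hsup : sSup {c ∈ Gset n (m - 1) | c < a⁻¹} = c₀⁻¹ := by
        have h := sInf_inv_eq (m := m - 1) (n := n) (t := a) (ne_top_of_lt hlt)
        rw [← hc0] at h
        exact h.symm
      refine ⟨by rw [hV]; exact hmem', ?_, ?_⟩
      · rw [hV, hV', hsup]
      · rw [hV', hsup]; exact GInt_transpose hmem'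
  · intro hale
    rcases lt_or_eq_of_le hale with halt | haeq
    · -- m/n < a
      have haG : a ∈ Gset m (n - 1) := mem_Gset_of_gt ha halt
      have hbG : b ∈ Gset m (n - 1) := mem_Gset_of_gt hb (halt.trans hlt)
      have hmem' : (a, b) ∈ GInt m (n - 1) :=
        ⟨haG, hbG, hlt, fun c hc => hbtw c (Gset_subset le_rfl (Nat.sub_le n 1) hc)⟩
      have hV : Vmap m n (a, b) = (a, b) := by
        simp only [Vmap]
        rw [if_neg (not_lt.mpr (halt.trans hlt).le), if_neg (halt.trans hlt).ne',
          if_neg halt.ne']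
      have h1 : a⁻¹ < (n : ℝ≥0∞) / m := by
        rw [← hinv]; exact ENNReal.inv_lt_inv.mpr halt
      have hV' : Vmap n m (b⁻¹, a⁻¹) = (b⁻¹, a⁻¹) := by
        simp only [Vmap]; rw [if_pos h1]
      exact ⟨by rw [hV]; exact hmem', by rw [hV, hV'],
        by rw [hV']; exact GInt_transpose hmem'⟩
    · -- m/n = a
      have hb_gt : (m : ℝ≥0∞) / n < b := haeq ▸ hlt
      have hb_ne0 : b ≠ 0 := (hmn_pos.trans hb_gt).ne'
      have hbG : b ∈ Gset m (n - 1) := mem_Gset_of_gt hb hb_gt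
      set d := sSup {c ∈ Gset m (n - 1) | c < b} with hd
      have hdmem := sSup_mem_interval (m := m) (n := n - 1) (t := b) hb_ne0
      rw [← hd] at hdmem
      have hV : Vmap m n (a, b) = (d, b) := by
        simp only [Vmap]
        rw [if_neg (not_lt.mpr hb_gt.le), if_neg hb_gt.ne', if_pos haeq.symm, ← hd]
      have hmem' : (d, b) ∈ GInt m (n - 1) := by
        refine ⟨hdmem.1, hbG, hdmem.2, ?_⟩
        rintro c hc ⟨h1, h2⟩
        have h1' : sSup {c ∈ Gset m (n - 1) | c < b} < c := h1
        have hle : c ≤ sSup {c ∈ Gset m (n - 1) | c < b} :=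
          le_sSup (Set.mem_sep hc (show c < b from h2))
        exact absurd hle (not_le.mpr h1')
      have hainv : a⁻¹ = (n : ℝ≥0∞) / m := by rw [← haeq, hinv]
      have hV' : Vmap n m (b⁻¹, a⁻¹) = (b⁻¹, sInf {c ∈ Gset (n - 1) m | b⁻¹ < c}) := by
        simp only [Vmap]
        rw [if_neg (by rw [hainv]; exact lt_irrefl _), if_pos hainv]
      have hinf : sInf {c ∈ Gset (n - 1) m | b⁻¹ < c} = d⁻¹ := by
        have h := sInf_inv_eq (m := n - 1) (n := m) (t := b⁻¹)
          (ENNReal.inv_ne_top.mpr hb_ne0)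
        rw [inv_inv, ← hd] at h
        rw [← h, inv_inv]
      refine ⟨by rw [hV]; exact hmem', ?_, ?_⟩
      · rw [hV, hV', hinf]
      · rw [hV', hinf]; exact GInt_transpose hmem'
end

section
/- Let m and n be positive integers and let ξ be a real number with 0 < ξ < m/n. If the ranking table τ^{m+1,n+1}_ξ is injective on [m+1]×[n+1], then τ^{m+1,n+1}_ξ(m+1,1) > τ^{m+1,n+1}_ξ(1,n+1), i.e. Δ_{m+1,n+1}(ξ) > 0. -/
open Finset
open scoped Classical

/-- if `0 < ξ < m/n` and `τ^{m+1,n+1}_ξ` is injective, then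
`Δ_{m+1,n+1}(ξ) > 0`. -/
theorem Delta_pos_of_lt (m n : ℕ) (hm : 1 ≤ m) (hn : 1 ≤ n)
    (ξ : ℝ) (h0 : 0 < ξ) (h1 : ξ < (m : ℝ) / (n : ℝ))
    (hinj : Set.InjOn (fun p : ℕ × ℕ => tau (m + 1) (n + 1) ξ p.1 p.2)
      ↑(Finset.Icc 1 (m + 1) ×ˢ Finset.Icc 1 (n + 1))) :
    0 < Delta (m + 1) (n + 1) ξ := by
  have hn0 : (0:ℝ) < (n:ℝ) := by exact_mod_cast hn
  have hkey : (n:ℝ) * ξ < (m:ℝ) := by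
    have := (lt_div_iff₀ hn0).mp h1
    linarith
  have hthr : ((1:ℕ):ℝ) + ((n+1:ℕ):ℝ) * ξ ≤ ((m+1:ℕ):ℝ) + ((1:ℕ):ℝ) * ξ := by
    push_cast
    nlinarith
  have hle : tau (m+1) (n+1) ξ 1 (n+1) ≤ tau (m+1) (n+1) ξ (m+1) 1 := by
    apply Finset.card_le_card
    intro p hp
    simp only [Finset.mem_filter] at hp ⊢
    exact ⟨hp.1, hp.2.trans hthr⟩
  have hmem1 : ((m+1 : ℕ), (1:ℕ)) ∈ (Finset.Icc 1 (m + 1) ×ˢ Finset.Icc 1 (n + 1) : Finset (ℕ × ℕ)) := by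
    simp
  have hmem2 : ((1:ℕ), (n+1 : ℕ)) ∈ (Finset.Icc 1 (m + 1) ×ˢ Finset.Icc 1 (n + 1) : Finset (ℕ × ℕ)) := by
    simp
  have hne : tau (m+1) (n+1) ξ (m+1) 1 ≠ tau (m+1) (n+1) ξ 1 (n+1) := by
    intro h
    have := hinj (Finset.mem_coe.mpr hmem1) (Finset.mem_coe.mpr hmem2) h
    have : m + 1 = 1 := congrArg Prod.fst this
    omega
  have : tau (m+1) (n+1) ξ 1 (n+1) < tau (m+1) (n+1) ξ (m+1) 1 := lt_of_le_of_ne hle (fun h => hne h.symm)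
  unfold Delta
  omega
end

section
/- Let m ≥ 1 and n ≥ 2 be integers, let (a,b) ∈ G^{int}_{m−1,n−1}, and let ξ be a real number with a < ξ < b. If Δ_{m,n}(ξ) > −n, then a < m/(n−1). -/
open Finset
open scoped Classical

open scoped ENNReal

private lemma nat_div_add_div (a b c : ℕ) (hc : 0 < c) : (a + b) / c ≤ a / c + b / c + 1 := by
  rw [Nat.add_div hc]; split_ifs <;> omega

/-- if `(a,b) ∈ G^{int}_{m−1,n−1}`, `a < ξ < b` and `Δ_{m,n}(ξ) > −n`,
then `a < m/(n−1)`. -/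
theorem lt_of_Delta_gt (m n : ℕ) (hm : 1 ≤ m) (hn : 2 ≤ n)
    (a b : ℝ≥0∞) (hab : (a, b) ∈ GInt (m - 1) (n - 1))
    (ξ : ℝ) (ha : a < ENNReal.ofReal ξ) (hb : ENNReal.ofReal ξ < b)
    (hΔ : -(n : ℤ) < Delta m n ξ) :
    a < (m : ℝ≥0∞) / ((n - 1 : ℕ) : ℝ≥0∞) := by
  by_contra hcon
  push_neg at hcon
  -- ξ is positive
  have hξ : 0 < ξ := by
    by_contra h
    push_neg at h
    rw [ENNReal.ofReal_eq_zero.mpr h] at ha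
    exact absurd ha (by simp)
  have hatop : a ≠ ⊤ := ha.ne_top
  have ha0 : a ≠ 0 := by
    intro h
    have hpos : (0 : ℝ≥0∞) < (m : ℝ≥0∞) / ((n - 1 : ℕ) : ℝ≥0∞) :=
      ENNReal.div_pos (by simp only [ne_eq, Nat.cast_eq_zero]; omega) (by simp)
    rw [h] at hcon
    exact absurd hcon hpos.not_ge
  -- extract a = p/q
  have hG := hab.1
  simp only [Gset, Set.mem_union, Set.mem_insert_iff, Set.mem_singleton_iff,
    Set.mem_setOf_eq] at hG
  rcases hG with (h0 | htop) | ⟨p, hp, q, hq, haeq⟩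
  · exact ha0 h0
  · exact hatop htop
  rw [Finset.mem_Icc] at hp hq
  obtain ⟨hp1, hp2⟩ := hp
  obtain ⟨hq1, hq2⟩ := hq
  have hm2 : 2 ≤ m := by omega
  have hq0' : 0 < q := hq1
  have hq0R : (0 : ℝ) < (q : ℝ) := by exact_mod_cast hq1
  have hn1R : (0 : ℝ) < ((n - 1 : ℕ) : ℝ) := by
    have : 0 < n - 1 := by omega
    exact_mod_cast this
  -- a as ofReal
  have haR : a = ENNReal.ofReal ((p : ℝ) / (q : ℝ)) := by
    rw [haeq, ENNReal.ofReal_div_of_pos hq0R, ENNReal.ofReal_natCast, ENNReal.ofReal_natCast]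
  have hξpq : (p : ℝ) / (q : ℝ) < ξ := by
    rw [haR] at ha
    exact (ENNReal.ofReal_lt_ofReal_iff hξ).mp ha
  -- m/(n-1) ≤ p/q over ℝ, hence m*q ≤ (n-1)*p over ℕ
  have hconR : (m : ℝ) / ((n - 1 : ℕ) : ℝ) ≤ (p : ℝ) / (q : ℝ) := by
    rw [haR] at hcon
    have hmn : ((m : ℝ≥0∞) / ((n - 1 : ℕ) : ℝ≥0∞))
        = ENNReal.ofReal ((m : ℝ) / ((n - 1 : ℕ) : ℝ)) := by
      rw [ENNReal.ofReal_div_of_pos hn1R, ENNReal.ofReal_natCast, ENNReal.ofReal_natCast]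
    rw [hmn] at hcon
    exact (ENNReal.ofReal_le_ofReal_iff (by positivity)).mp hcon
  have hmq : m * q ≤ (n - 1) * p := by
    have h1 : (m : ℝ) * (q : ℝ) ≤ ((n - 1 : ℕ) : ℝ) * (p : ℝ) := by
      rw [div_le_div_iff₀ hn1R hq0R] at hconR
      linarith
    exact_mod_cast h1
  -- q ≤ n - 2
  have hqn2 : q ≤ n - 2 := by
    by_contra h
    have hqe : q = n - 1 := by omega
    rw [hqe] at hmq
    have h2 : (n - 1) * m ≤ (n - 1) * p := by rw [mul_comm (n - 1) m]; exact hmq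
    have hmp : m ≤ p := Nat.le_of_mul_le_mul_left h2 (by omega)
    omega
  -- key arithmetic lemma
  have key : ∀ u v : ℕ, u * q ≤ v * p → 0 < v → (u : ℝ) < (v : ℝ) * ξ := by
    intro u v huv hv
    have hvR : (0 : ℝ) < (v : ℝ) := by exact_mod_cast hv
    have h1 : (u : ℝ) * (q : ℝ) ≤ (v : ℝ) * (p : ℝ) := by exact_mod_cast huv
    have h2 : (u : ℝ) / (v : ℝ) ≤ (p : ℝ) / (q : ℝ) := by
      rw [div_le_div_iff₀ hvR hq0R]; linarith
    have h3 := h2.trans_lt hξpq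
    rw [div_lt_iff₀ hvR] at h3
    linarith
  -- the comparison point: m + ξ ≤ 1 + n ξ
  have hmnξ : (m : ℝ) + 1 * ξ ≤ 1 + (n : ℝ) * ξ := by
    have h1 : m * q ≤ (n - 1) * ((n-1) * p / (n-1)) := by
      rw [Nat.mul_div_cancel_left p (show 0 < n - 1 by omega)]; exact hmq
    have h2 : (m : ℝ) < ((n - 1 : ℕ) : ℝ) * ξ := by
      have := key m (n - 1) hmq (by omega)
      exact this
    have h3 : ((n - 1 : ℕ) : ℝ) = (n : ℝ) - 1 := by
      have : 1 ≤ n := by omega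
      push_cast [this]; ring
    rw [h3] at h2; linarith
  -- predicates
  set P1 : ℕ × ℕ → Prop := fun z => (z.1 : ℝ) + (z.2 : ℝ) * ξ ≤ ((m : ℕ) : ℝ) + ((1 : ℕ) : ℝ) * ξ with hP1def
  set P2 : ℕ × ℕ → Prop := fun z => (z.1 : ℝ) + (z.2 : ℝ) * ξ ≤ ((1 : ℕ) : ℝ) + ((n : ℕ) : ℝ) * ξ with hP2def
  have hsub : ∀ z : ℕ × ℕ, P1 z → P2 z := by
    intro z hz
    simp only [hP1def, hP2def] at *
    push_cast at hz ⊢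
    linarith
  have htau1 : tau m n ξ m 1 = ((Icc 1 m ×ˢ Icc 1 n).filter P1).card := rfl
  have htau2 : tau m n ξ 1 n = ((Icc 1 m ×ˢ Icc 1 n).filter P2).card := rfl
  set D : Finset (ℕ × ℕ) := (Icc 1 m ×ˢ Icc 1 n).filter (fun z => P2 z ∧ ¬ P1 z) with hDdef
  -- splitting
  have hsplit : tau m n ξ m 1 + D.card = tau m n ξ 1 n := by
    have hkey := Finset.card_filter_add_card_filter_not
      (s := (Icc 1 m ×ˢ Icc 1 n).filter P2) (p := P1)
    rw [Finset.filter_filter, Finset.filter_filter] at hkey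
    have e1 : (Icc 1 m ×ˢ Icc 1 n).filter P1
        = (Icc 1 m ×ˢ Icc 1 n).filter (fun z => P2 z ∧ P1 z) := by
      apply Finset.filter_congr
      intro z _
      exact ⟨fun h => ⟨hsub z h, h⟩, fun h => h.2⟩
    rw [htau1, htau2, e1, hDdef, ← hkey]
  have hDlt : D.card < n := by
    have : Delta m n ξ = -(D.card : ℤ) := by
      rw [Delta]; omega
    rw [this] at hΔ
    omega
  -- now produce n elements of D
  have hDge : n ≤ D.card := by
    classical
    set f : ℕ → ℕ := fun v => min (m - 1) (v * p / q) with hfdef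
    set g : ℕ → ℕ × ℕ := fun v => if v = n then (m - p + 1, q + 1) else (m - f v, v + 1)
      with hgdef
    have hfle : ∀ v, f v ≤ m - 1 := fun v => min_le_left _ _
    have hgmem : ∀ v ∈ Icc 1 n, g v ∈ D := by
      intro v hv
      rw [Finset.mem_Icc] at hv
      simp only [hgdef]
      by_cases hvn : v = n
      · -- extra pair (m - p + 1, q + 1)
        rw [if_pos hvn, hDdef, Finset.mem_filter, Finset.mem_product, Finset.mem_Icc,
          Finset.mem_Icc]
        have hc1 : ((m - p + 1 : ℕ) : ℝ) = (m : ℝ) - (p : ℝ) + 1 := by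
          push_cast [Nat.cast_sub (show p ≤ m by omega)]; ring
        refine ⟨⟨⟨by omega, by omega⟩, by omega, by omega⟩, ?_, ?_⟩
        · -- P2
          simp only [hP2def]
          have h1 : (m - p) * q ≤ (n - 1 - q) * p := by
            have e1 : (m - p) * q = m * q - p * q := by rw [Nat.sub_mul]
            have e2 : (n - 1 - q) * p = (n - 1) * p - q * p := by rw [Nat.sub_mul]
            have e3 : p * q = q * p := mul_comm _ _
            omega
          have h2 := key (m - p) (n - 1 - q) h1 (by omega)
          have hc2 : ((m - p : ℕ) : ℝ) = (m : ℝ) - (p : ℝ) :=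
            Nat.cast_sub (show p ≤ m by omega)
          have hc3 : ((n - 1 - q : ℕ) : ℝ) = (n : ℝ) - 1 - (q : ℝ) := by
            push_cast [Nat.cast_sub (show q ≤ n - 1 by omega),
              Nat.cast_sub (show 1 ≤ n by omega)]; ring
          rw [hc2, hc3] at h2
          rw [hc1]
          push_cast
          linarith
        · -- ¬ P1
          simp only [hP1def]
          have h1 : (p - 1) * q ≤ q * p := by
            calc (p - 1) * q ≤ p * q := Nat.mul_le_mul_right _ (by omega)
            _ = q * p := mul_comm _ _
          have h2 := key (p - 1) q h1 hq1
          have hc2 : ((p - 1 : ℕ) : ℝ) = (p : ℝ) - 1 := by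
            push_cast [Nat.cast_sub hp1]; ring
          rw [hc2] at h2
          rw [hc1]
          push_cast
          intro hcontra
          linarith
      · -- main pair (m - f v, v + 1), 1 ≤ v ≤ n - 1
        rw [if_neg hvn, hDdef, Finset.mem_filter, Finset.mem_product, Finset.mem_Icc,
          Finset.mem_Icc]
        have hvn1 : v ≤ n - 1 := by omega
        have hfv := hfle v
        have hc1 : ((m - f v : ℕ) : ℝ) = (m : ℝ) - (f v : ℝ) :=
          Nat.cast_sub (by omega)
        refine ⟨⟨⟨by omega, by omega⟩, by omega, by omega⟩, ?_, ?_⟩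
        · -- P2 : (m - f v) + (v+1) ξ ≤ 1 + n ξ
          simp only [hP2def]
          by_cases hu0 : m - 1 - f v = 0
          · -- f v = m - 1
            have hnv : (0 : ℝ) ≤ ((n : ℝ) - 1 - (v : ℝ)) * ξ := by
              apply mul_nonneg _ hξ.le
              have : (v : ℝ) ≤ ((n - 1 : ℕ) : ℝ) := by exact_mod_cast hvn1
              have h3 : ((n - 1 : ℕ) : ℝ) = (n : ℝ) - 1 := by
                push_cast [Nat.cast_sub (show 1 ≤ n by omega)]; ring
              linarith [h3 ▸ this]
            have hfm : f v = m - 1 := by omega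
            rw [hc1, hfm]
            have : ((m - 1 : ℕ) : ℝ) = (m : ℝ) - 1 := by
              push_cast [Nat.cast_sub (show 1 ≤ m by omega)]; ring
            rw [this]
            push_cast
            linarith
          · -- u = m - 1 - f v ≥ 1
            have hu1 : 1 ≤ m - 1 - f v := by omega
            -- v ≤ n - 2 since f (n-1) = m-1
            have hvn2 : v ≤ n - 2 := by
              by_contra hc
              have hve : v = n - 1 := by omega
              have : m ≤ (n - 1) * p / q := (Nat.le_div_iff_mul_le hq0').mpr hmq
              have hfe : f v = m - 1 := by
                rw [hfdef]
                simp only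
                rw [hve]
                exact min_eq_left (by
                  have := (Nat.le_div_iff_mul_le hq0').mpr hmq
                  omega)
              omega
            -- m - 1 - f v ≤ (n-1-v)*p/q
            have hudiv : m - 1 - f v ≤ (n - 1 - v) * p / q := by
              by_cases hcap : m - 1 ≤ (n - 1 - v) * p / q
              · omega
              · have hfveq : f v = v * p / q := by
                  rw [hfdef]; simp only
                  apply min_eq_right
                  by_contra hc
                  push_neg at hc
                  have : f v = m - 1 := by rw [hfdef]; simp only; omega
                  omega
                have hsum : m ≤ ((n - 1) * p) / q := (Nat.le_div_iff_mul_le hq0').mpr hmq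
                have hsplit2 : (n - 1) * p = v * p + (n - 1 - v) * p := by
                  rw [← Nat.add_mul]
                  congr 1
                  omega
                have hadd : ((n - 1) * p) / q ≤ v * p / q + (n - 1 - v) * p / q + 1 := by
                  rw [hsplit2]
                  exact nat_div_add_div _ _ _ hq0'
                omega
            have huq : (m - 1 - f v) * q ≤ (n - 1 - v) * p :=
              (Nat.le_div_iff_mul_le hq0').mp hudiv
            have h2 := key (m - 1 - f v) (n - 1 - v) huq (by omega)
            have hc2 : ((m - 1 - f v : ℕ) : ℝ) = (m : ℝ) - 1 - (f v : ℝ) := by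
              push_cast [Nat.cast_sub (show f v ≤ m - 1 by omega),
                Nat.cast_sub (show 1 ≤ m by omega)]; ring
            have hc3 : ((n - 1 - v : ℕ) : ℝ) = (n : ℝ) - 1 - (v : ℝ) := by
              push_cast [Nat.cast_sub (show v ≤ n - 1 by omega),
                Nat.cast_sub (show 1 ≤ n by omega)]; ring
            rw [hc2, hc3] at h2
            rw [hc1]
            push_cast
            linarith
        · -- ¬ P1 : m + ξ < (m - f v) + (v+1) ξ, i.e. f v < v ξ
          simp only [hP1def]
          have hfq : f v * q ≤ v * p := by
            have h1 : f v ≤ v * p / q := min_le_right _ _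
            exact (Nat.le_div_iff_mul_le hq0').mp h1
          have h2 := key (f v) v hfq (by omega)
          rw [hc1]
          push_cast
          intro hcontra
          linarith
    have hginj : Set.InjOn g ↑(Icc 1 n) := by
      intro x hx y hy hxy
      simp only [Finset.coe_Icc, Set.mem_Icc] at hx hy
      simp only [hgdef] at hxy
      by_cases hxn : x = n <;> by_cases hyn : y = n
      · omega
      · rw [if_pos hxn, if_neg hyn] at hxy
        obtain ⟨h1, h2⟩ := Prod.mk.injEq .. ▸ hxy
        exfalso
        have hyq : y = q := by omega
        have : f y = p := by
          rw [hfdef]; simp only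
          rw [hyq, Nat.mul_div_cancel_left p hq0']
          exact min_eq_right hp2
        omega
      · rw [if_neg hxn, if_pos hyn] at hxy
        obtain ⟨h1, h2⟩ := Prod.mk.injEq .. ▸ hxy
        exfalso
        have hxq : x = q := by omega
        have : f x = p := by
          rw [hfdef]; simp only
          rw [hxq, Nat.mul_div_cancel_left p hq0']
          exact min_eq_right hp2
        omega
      · rw [if_neg hxn, if_neg hyn] at hxy
        obtain ⟨h1, h2⟩ := Prod.mk.injEq .. ▸ hxy
        omega
    have := Finset.card_le_card_of_injOn g hgmem hginj
    simpa using this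
  omega
end

section
/- Let m and n be positive integers and let ξ > 0 be a real number such that the ranking table τ^{m,n}_ξ is injective on [m]×[n]. If Δ_{m,n}(ξ) > −n, then there exists a real number ξ' > 0 such that τ^{m+1,n}_{ξ'} is injective on [m+1]×[n], τ^{m+1,n}_{ξ'}(m+1,1) = τ^{m,n}_ξ(m,1) + n, and τ^{m+1,n}_{ξ'}(1,n) = τ^{m,n}_ξ(1,n). (Every Young terminal pair that has a horizontal child among the terminal pairs of difference equation type has that same horizontal child among the Young terminal pairs.) -/
open Finset
open scoped Classical

/-- Count of `s ∈ [1,m]` with `s ≤ x`. -/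
noncomputable def cnt (m : ℕ) (x : ℝ) : ℕ :=
  ((Finset.Icc 1 m).filter (fun s : ℕ => (s : ℝ) ≤ x)).card

lemma cnt_eq_of_ge {m : ℕ} {x : ℝ} (h : (m : ℝ) ≤ x) : cnt m x = m := by
  unfold cnt
  rw [Finset.filter_true_of_mem, Nat.card_Icc]
  · omega
  · intro s hs
    simp only [Finset.mem_Icc] at hs
    have : (s : ℝ) ≤ m := by exact_mod_cast hs.2
    linarith

lemma cnt_eq_zero {m : ℕ} {x : ℝ} (h : x < 1) : cnt m x = 0 := by
  unfold cnt
  rw [Finset.card_eq_zero, Finset.filter_eq_empty_iff]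
  intro s hs
  simp only [Finset.mem_Icc] at hs
  have : (1 : ℝ) ≤ s := by exact_mod_cast hs.1
  push_neg
  linarith

lemma cnt_eq_k {m k : ℕ} {x : ℝ} (hk : k ≤ m) (h1 : (k : ℝ) ≤ x) (h2 : x < k + 1) :
    cnt m x = k := by
  unfold cnt
  have : (Finset.Icc 1 m).filter (fun s : ℕ => (s : ℝ) ≤ x) = Finset.Icc 1 k := by
    ext s
    simp only [Finset.mem_filter, Finset.mem_Icc]
    constructor
    · rintro ⟨⟨h1s, h2s⟩, h3s⟩
      refine ⟨h1s, ?_⟩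
      by_contra hc
      push_neg at hc
      have : (k : ℝ) + 1 ≤ s := by exact_mod_cast hc
      linarith
    · rintro ⟨h1s, h2s⟩
      have : (s : ℝ) ≤ k := by exact_mod_cast h2s
      exact ⟨⟨h1s, le_trans h2s hk⟩, by linarith⟩
  rw [this, Nat.card_Icc]
  omega

lemma tau_sum (m n : ℕ) (ξ : ℝ) (i j : ℕ) :
    tau m n ξ i j = ∑ t ∈ Finset.Icc 1 n, cnt m ((i : ℝ) + (j : ℝ) * ξ - (t : ℝ) * ξ) := by
  unfold tau cnt
  rw [Finset.card_filter, Finset.sum_product_right]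
  refine Finset.sum_congr rfl fun t _ => ?_
  rw [Finset.card_filter]
  refine Finset.sum_congr rfl fun s _ => ?_
  refine if_congr ?_ rfl rfl
  constructor <;> intro h <;> linarith

lemma tau_congr {m n : ℕ} {ξ : ℝ} {i j i' j' : ℕ}
    (h : (i : ℝ) + (j : ℝ) * ξ = (i' : ℝ) + (j' : ℝ) * ξ) :
    tau m n ξ i j = tau m n ξ i' j' := by
  unfold tau
  rw [h]

lemma tau_lt {m n : ℕ} {ξ : ℝ} {p q : ℕ × ℕ}
    (hq : q ∈ Finset.Icc 1 m ×ˢ Finset.Icc 1 n)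
    (h : (p.1 : ℝ) + (p.2 : ℝ) * ξ < (q.1 : ℝ) + (q.2 : ℝ) * ξ) :
    tau m n ξ p.1 p.2 < tau m n ξ q.1 q.2 := by
  apply Finset.card_lt_card
  constructor
  · intro r hr
    simp only [Finset.mem_filter] at hr ⊢
    exact ⟨hr.1, le_trans hr.2 h.le⟩
  · intro hc
    have hq1 : q ∈ (Finset.Icc 1 m ×ˢ Finset.Icc 1 n).filter
        (fun r => (r.1 : ℝ) + (r.2 : ℝ) * ξ ≤ (q.1 : ℝ) + (q.2 : ℝ) * ξ) := by
      simp only [Finset.mem_filter]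
      exact ⟨hq, le_refl _⟩
    have := hc hq1
    simp only [Finset.mem_filter] at this
    linarith [this.2]

/-- The key discrete inequality. -/
lemma key_ineq (M N u a : ℕ) (hu1 : 1 ≤ u) (huN : u ≤ N) (ha1 : 1 ≤ a) (haM : a ≤ M)
    (h : u * (M + 1) ≤ a * N) :
    N * M + M + 1 ≤ 2 * ∑ j ∈ Finset.Icc 1 N, min M (j * a / u) := by
  have hu0 : 0 < u := hu1
  have huN' : u < N := by
    rcases lt_or_eq_of_le huN with h' | h'
    · exact h'
    · exfalso
      subst h'
      nlinarith
  have hN2 : 2 ≤ N := by omega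
  set f : ℕ → ℕ := fun j => min M (j * a / u) with hf
  -- f N = M
  have hfN : f N = M := by
    have : M + 1 ≤ N * a / u := by
      rw [Nat.le_div_iff_mul_le hu0]
      calc (M + 1) * u = u * (M + 1) := by ring
        _ ≤ a * N := h
        _ = N * a := by ring
    simp only [hf, min_eq_left_iff]
    omega
  -- pair bound
  have hpair : ∀ j ∈ Finset.Icc 1 (N - 1), M ≤ f j + f (N - j) := by
    intro j hj
    simp only [Finset.mem_Icc] at hj
    by_cases h1 : M ≤ j * a / u
    · have : f j = M := by simp only [hf, min_eq_left_iff]; omega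
      omega
    by_cases h2 : M ≤ (N - j) * a / u
    · have : f (N - j) = M := by simp only [hf, min_eq_left_iff]; omega
      omega
    push_neg at h1 h2
    have hfj : f j = j * a / u := by simp only [hf]; omega
    have hfNj : f (N - j) = (N - j) * a / u := by simp only [hf]; omega
    rw [hfj, hfNj]
    -- j*a/u + (N-j)*a/u ≥ M
    set x := j * a with hx
    set y := (N - j) * a with hy
    have hxy : x + y = N * a := by
      simp only [hx, hy]
      have : j + (N - j) = N := by omega
      calc j * a + (N - j) * a = (j + (N - j)) * a := by ring
        _ = N * a := by rw [this]
    have hdx := Nat.div_add_mod x u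
    have hdy := Nat.div_add_mod y u
    have hmx : x % u < u := Nat.mod_lt _ hu0
    have hmy : y % u < u := Nat.mod_lt _ hu0
    have hlt : u * (M + 1) < u * (x / u + y / u + 2) := by
      calc u * (M + 1) ≤ a * N := h
        _ = N * a := by ring
        _ = x + y := hxy.symm
        _ = u * (x / u) + x % u + (u * (y / u) + y % u) := by rw [hdx, hdy]
        _ < u * (x / u) + u + (u * (y / u) + u) := by omega
        _ = u * (x / u + y / u + 2) := by ring
    have := Nat.lt_of_mul_lt_mul_left hlt
    omega
  -- strict at j = u
  have hstrict : M + 1 ≤ f u + f (N - u) := by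
    have hfu : f u = a := by
      simp only [hf]
      rw [show u * a / u = a from Nat.mul_div_cancel_left a hu0]
      omega
    have hfNu : M + 1 - a ≤ f (N - u) := by
      have hdiv : M + 1 - a ≤ (N - u) * a / u := by
        rw [Nat.le_div_iff_mul_le hu0]
        have e1 : (M + 1 - a) * u = u * (M + 1) - u * a := by
          rw [Nat.sub_mul]; ring_nf
        have e2 : (N - u) * a = N * a - u * a := by
          rw [Nat.sub_mul]
        rw [e1, e2]
        have : u * (M + 1) ≤ N * a := by linarith [h, (by ring : a * N = N * a)]
        omega
      simp only [hf]
      omega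
    omega
  -- sum manipulation
  have hsplit : ∑ j ∈ Finset.Icc 1 N, f j
      = ∑ j ∈ Finset.Icc 1 (N - 1), f j + f N := by
    have hN1 : N - 1 + 1 = N := by omega
    rw [← hN1, Finset.sum_Icc_succ_top (by omega), hN1]
  have hrefl : ∑ j ∈ Finset.Icc 1 (N - 1), f (N - j)
      = ∑ j ∈ Finset.Icc 1 (N - 1), f j := by
    apply Finset.sum_nbij' (i := fun j => N - j) (j := fun j => N - j)
    · intro j hj; simp only [Finset.mem_Icc] at hj ⊢; omega
    · intro j hj; simp only [Finset.mem_Icc] at hj ⊢; omega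
    · intro j hj; simp only [Finset.mem_Icc] at hj; omega
    · intro j hj; simp only [Finset.mem_Icc] at hj; omega
    · intro j hj; rfl
  have hbig : (N - 1) * M + 1 ≤ ∑ j ∈ Finset.Icc 1 (N - 1), (f j + f (N - j)) := by
    have hlt : ∑ _j ∈ Finset.Icc 1 (N - 1), M
        < ∑ j ∈ Finset.Icc 1 (N - 1), (f j + f (N - j)) := by
      apply Finset.sum_lt_sum hpair
      refine ⟨u, ?_, ?_⟩
      · simp only [Finset.mem_Icc]; omega
      · omega
    rw [Finset.sum_const, Nat.card_Icc, smul_eq_mul] at hlt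
    have : (N - 1 + 1 - 1) = N - 1 := by omega
    rw [this] at hlt
    omega
  have hdist : ∑ j ∈ Finset.Icc 1 (N - 1), (f j + f (N - j))
      = ∑ j ∈ Finset.Icc 1 (N - 1), f j + ∑ j ∈ Finset.Icc 1 (N - 1), f (N - j) :=
    Finset.sum_add_distrib
  have hNM : (N - 1) * M + M = N * M := by
    have : N - 1 + 1 = N := by omega
    calc (N - 1) * M + M = (N - 1 + 1) * M := by ring
      _ = N * M := by rw [this]
  have h2S : 2 * ∑ j ∈ Finset.Icc 1 N, f j
      = ∑ j ∈ Finset.Icc 1 (N - 1), (f j + f (N - j)) + 2 * M := by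
    rw [hsplit, hfN, hdist, hrefl]
    ring
  rw [h2S]
  omega

lemma tauB_formula (M n : ℕ) (hn : 1 ≤ n) (ξ : ℝ) (h0 : 0 < ξ) :
    tau (M + 1) n ξ 1 n = n + ∑ u ∈ Finset.Icc 1 (n - 1), min M ⌊(u : ℝ) * ξ⌋₊ := by
  rw [tau_sum]
  have hre : ∑ t ∈ Finset.Icc 1 n, cnt (M + 1) (((1 : ℕ) : ℝ) + (n : ℝ) * ξ - (t : ℝ) * ξ)
      = ∑ u ∈ Finset.Icc 0 (n - 1), cnt (M + 1) (1 + (u : ℝ) * ξ) := by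
    apply Finset.sum_nbij' (i := fun t => n - t) (j := fun u => n - u)
    · intro t ht; simp only [Finset.mem_Icc] at ht ⊢; omega
    · intro u hu; simp only [Finset.mem_Icc] at hu ⊢; omega
    · intro t ht; simp only [Finset.mem_Icc] at ht; omega
    · intro u hu; simp only [Finset.mem_Icc] at hu; omega
    · intro t ht
      simp only [Finset.mem_Icc] at ht
      congr 1
      rw [Nat.cast_sub ht.2]
      ring
  rw [hre]
  have h01 : Finset.Icc 0 (n - 1) = insert 0 (Finset.Icc 1 (n - 1)) := by
    ext x; simp only [Finset.mem_Icc, Finset.mem_insert]; omega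
  rw [h01, Finset.sum_insert (by simp)]
  have h0 : cnt (M + 1) (1 + (0 : ℕ) * ξ) = 1 := by
    apply cnt_eq_k (k := 1) (by omega) (by push_cast; linarith) (by push_cast; linarith)
  rw [h0]
  have hterm : ∀ u ∈ Finset.Icc 1 (n - 1),
      cnt (M + 1) (1 + (u : ℝ) * ξ) = 1 + min M ⌊(u : ℝ) * ξ⌋₊ := by
    intro u hu
    simp only [Finset.mem_Icc] at hu
    have hpos : (0 : ℝ) ≤ (u : ℝ) * ξ := by positivity
    have hfle : (⌊(u : ℝ) * ξ⌋₊ : ℝ) ≤ (u : ℝ) * ξ := Nat.floor_le hpos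
    have hflt : (u : ℝ) * ξ < ⌊(u : ℝ) * ξ⌋₊ + 1 := Nat.lt_floor_add_one _
    by_cases hw : ⌊(u : ℝ) * ξ⌋₊ ≤ M
    · rw [cnt_eq_k (k := ⌊(u : ℝ) * ξ⌋₊ + 1) (by omega) (by push_cast; linarith)
        (by push_cast; linarith)]
      omega
    · push_neg at hw
      rw [cnt_eq_of_ge (by
        have : (M : ℝ) < ⌊(u : ℝ) * ξ⌋₊ := by exact_mod_cast hw
        push_cast
        linarith)]
      omega
  rw [Finset.sum_congr rfl hterm, Finset.sum_add_distrib, Finset.sum_const, smul_eq_mul,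
    mul_one, Nat.card_Icc]
  omega

lemma tauA_formula (M n : ℕ) (hn : 1 ≤ n) (ξ : ℝ) (h0 : 0 < ξ)
    (hNT : ∀ u : ℕ, 1 ≤ u → u ≤ n - 1 → ∀ k : ℕ, 1 ≤ k → k ≤ M → (u : ℝ) * ξ ≠ k) :
    tau (M + 1) n ξ (M + 1) 1
      = (M + 1) + ∑ u ∈ Finset.Icc 1 (n - 1), (M - min M ⌊(u : ℝ) * ξ⌋₊) := by
  rw [tau_sum]
  simp only [Nat.cast_one]
  have hre : ∑ t ∈ Finset.Icc 1 n, cnt (M + 1) (((M + 1 : ℕ) : ℝ) + (1 : ℝ) * ξ - (t : ℝ) * ξ)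
      = ∑ u ∈ Finset.Icc 0 (n - 1), cnt (M + 1) (((M + 1 : ℕ) : ℝ) - (u : ℝ) * ξ) := by
    apply Finset.sum_nbij' (i := fun t => t - 1) (j := fun u => u + 1)
    · intro t ht; simp only [Finset.mem_Icc] at ht ⊢; omega
    · intro u hu; simp only [Finset.mem_Icc] at hu ⊢; omega
    · intro t ht; simp only [Finset.mem_Icc] at ht; omega
    · intro u hu; simp only [Finset.mem_Icc] at hu; omega
    · intro t ht
      simp only [Finset.mem_Icc] at ht
      congr 1
      rw [Nat.cast_sub ht.1]
      ring
  rw [hre]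
  have h01 : Finset.Icc 0 (n - 1) = insert 0 (Finset.Icc 1 (n - 1)) := by
    ext x; simp only [Finset.mem_Icc, Finset.mem_insert]; omega
  rw [h01, Finset.sum_insert (by simp)]
  have h0 : cnt (M + 1) (((M + 1 : ℕ) : ℝ) - (0 : ℕ) * ξ) = M + 1 := by
    apply cnt_eq_of_ge
    push_cast
    linarith
  rw [h0]
  have hterm : ∀ u ∈ Finset.Icc 1 (n - 1),
      cnt (M + 1) (((M + 1 : ℕ) : ℝ) - (u : ℝ) * ξ) = M - min M ⌊(u : ℝ) * ξ⌋₊ := by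
    intro u hu
    simp only [Finset.mem_Icc] at hu
    have hu1 : (1 : ℝ) ≤ (u : ℝ) := by exact_mod_cast hu.1
    have hpos : (0 : ℝ) < (u : ℝ) * ξ := by positivity
    set w := ⌊(u : ℝ) * ξ⌋₊ with hwdef
    have hfle : (w : ℝ) ≤ (u : ℝ) * ξ := Nat.floor_le hpos.le
    have hflt : (u : ℝ) * ξ < w + 1 := Nat.lt_floor_add_one _
    by_cases hw : w < M
    · -- value M - w
      have hgt : (w : ℝ) < (u : ℝ) * ξ := by
        rcases Nat.eq_zero_or_pos w with h' | h'
        · rw [h']; push_cast; exact hpos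
        · have hne := hNT u hu.1 hu.2 w h' (by omega)
          exact lt_of_le_of_ne hfle (fun hc => hne hc.symm)
      rw [cnt_eq_k (k := M - w) (by omega) ?_ ?_]
      · omega
      · rw [Nat.cast_sub hw.le]
        push_cast
        linarith
      · rw [Nat.cast_sub hw.le]
        push_cast
        linarith
    · push_neg at hw
      have hMlt : (M : ℝ) < (u : ℝ) * ξ := by
        rcases lt_or_eq_of_le hw with h' | h'
        · have : (M : ℝ) < w := by exact_mod_cast h'
          linarith
        · rcases Nat.eq_zero_or_pos M with hM0 | hM0
          · rw [hM0]; push_cast; exact hpos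
          · have hne := hNT u hu.1 hu.2 M hM0 le_rfl
            have : (M : ℝ) ≤ (u : ℝ) * ξ := by rw [h']; exact hfle
            exact lt_of_le_of_ne this (fun hc => hne hc.symm)
      rw [cnt_eq_zero (by push_cast; linarith)]
      omega
  rw [Finset.sum_congr rfl hterm]

set_option maxHeartbeats 2000000 in
/-- a Young terminal pair that has a horizontal child among terminal pairs of
difference equation type has that same horizontal child among Young terminal pairs. -/
theorem young_horizontal_child (m n : ℕ) (hm : 1 ≤ m) (hn : 1 ≤ n)
    (ξ : ℝ) (h0 : 0 < ξ)
    (hinj : Set.InjOn (fun p : ℕ × ℕ => tau m n ξ p.1 p.2)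
      ↑(Finset.Icc 1 m ×ˢ Finset.Icc 1 n))
    (hΔ : -(n : ℤ) < Delta m n ξ) :
    ∃ ξ' : ℝ, 0 < ξ' ∧
      Set.InjOn (fun p : ℕ × ℕ => tau (m + 1) n ξ' p.1 p.2)
        ↑(Finset.Icc 1 (m + 1) ×ˢ Finset.Icc 1 n) ∧
      tau (m + 1) n ξ' (m + 1) 1 = tau m n ξ m 1 + n ∧
      tau (m + 1) n ξ' 1 n = tau m n ξ 1 n := by
  obtain ⟨M, rfl⟩ : ∃ M, m = M + 1 := ⟨m - 1, by omega⟩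
  obtain ⟨N, rfl⟩ : ∃ N, n = N + 1 := ⟨n - 1, by omega⟩
  -- no ties for ξ
  have hNT : ∀ u : ℕ, 1 ≤ u → u ≤ (N + 1) - 1 → ∀ k : ℕ, 1 ≤ k → k ≤ M →
      (u : ℝ) * ξ ≠ (k : ℝ) := by
    intro u hu1 huN k hk1 hkM heq
    have hmem1 : ((k + 1 : ℕ), (1 : ℕ)) ∈ (Finset.Icc 1 (M + 1) ×ˢ Finset.Icc 1 (N + 1)) := by
      simp only [Finset.mem_product, Finset.mem_Icc]; omega
    have hmem2 : ((1 : ℕ), (u + 1 : ℕ)) ∈ (Finset.Icc 1 (M + 1) ×ˢ Finset.Icc 1 (N + 1)) := by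
      simp only [Finset.mem_product, Finset.mem_Icc]; omega
    have htau : tau (M + 1) (N + 1) ξ (k + 1) 1 = tau (M + 1) (N + 1) ξ 1 (u + 1) := by
      apply tau_congr
      push_cast
      linear_combination -heq
    have := hinj (Finset.mem_coe.mpr hmem1) (Finset.mem_coe.mpr hmem2) htau
    simp only [Prod.mk.injEq] at this
    omega
  have hA : tau (M + 1) (N + 1) ξ (M + 1) 1
      = (M + 1) + ∑ u ∈ Finset.Icc 1 N, (M - min M ⌊(u : ℝ) * ξ⌋₊) := by
    have := tauA_formula M (N + 1) (by omega) ξ h0 hNT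
    simpa using this
  have hB : tau (M + 1) (N + 1) ξ 1 (N + 1)
      = (N + 1) + ∑ u ∈ Finset.Icc 1 N, min M ⌊(u : ℝ) * ξ⌋₊ := by
    have := tauB_formula M (N + 1) (by omega) ξ h0
    simpa using this
  have hvle : ∀ u : ℕ, min M ⌊(u : ℝ) * ξ⌋₊ ≤ M := fun u => min_le_left _ _
  have hsplit : ∑ u ∈ Finset.Icc 1 N, (M - min M ⌊(u : ℝ) * ξ⌋₊)
      + ∑ u ∈ Finset.Icc 1 N, min M ⌊(u : ℝ) * ξ⌋₊ = N * M := by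
    rw [← Finset.sum_add_distrib]
    have hterm : ∀ u ∈ Finset.Icc 1 N,
        (M - min M ⌊(u : ℝ) * ξ⌋₊) + min M ⌊(u : ℝ) * ξ⌋₊ = M := by
      intro u _
      have := hvle u
      omega
    rw [Finset.sum_congr rfl hterm, Finset.sum_const, smul_eq_mul, Nat.card_Icc,
      Nat.add_sub_cancel]
  have hstar : 2 * ∑ u ∈ Finset.Icc 1 N, min M ⌊(u : ℝ) * ξ⌋₊ ≤ N * M + M := by
    rw [Delta, hA, hB] at hΔ
    generalize hQ : N * M = Q at hsplit ⊢
    omega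
  -- step 2 : v u * N < u * (M+1)
  have hvlt : ∀ u : ℕ, 1 ≤ u → u ≤ N → min M ⌊(u : ℝ) * ξ⌋₊ * N < u * (M + 1) := by
    intro u hu1 huN
    by_contra hc
    push_neg at hc
    have ha1 : 1 ≤ min M ⌊(u : ℝ) * ξ⌋₊ := by
      rcases Nat.eq_zero_or_pos (min M ⌊(u : ℝ) * ξ⌋₊) with h' | h'
      · rw [h'] at hc
        simp at hc
        have : 0 < u * (M + 1) := Nat.mul_pos (by omega) (by omega)
        omega
      · exact h'
    have hkey := key_ineq M N u (min M ⌊(u : ℝ) * ξ⌋₊) hu1 huN ha1 (hvle u)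
      (by linarith [hc])
    have hvuξ : ((min M ⌊(u : ℝ) * ξ⌋₊ : ℕ) : ℝ) ≤ (u : ℝ) * ξ := by
      calc ((min M ⌊(u : ℝ) * ξ⌋₊ : ℕ) : ℝ) ≤ (⌊(u : ℝ) * ξ⌋₊ : ℝ) := by
            exact_mod_cast min_le_right M _
        _ ≤ (u : ℝ) * ξ := Nat.floor_le (by positivity)
    have hmono : ∀ j ∈ Finset.Icc 1 N,
        min M (j * min M ⌊(u : ℝ) * ξ⌋₊ / u) ≤ min M ⌊(j : ℝ) * ξ⌋₊ := by
      intro j hj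
      apply min_le_min le_rfl
      apply Nat.le_floor
      have hu0 : (0 : ℝ) < (u : ℝ) := by exact_mod_cast hu1
      calc ((j * min M ⌊(u : ℝ) * ξ⌋₊ / u : ℕ) : ℝ)
          ≤ ((j * min M ⌊(u : ℝ) * ξ⌋₊ : ℕ) : ℝ) / (u : ℝ) := Nat.cast_div_le
        _ = (j : ℝ) * ((min M ⌊(u : ℝ) * ξ⌋₊ : ℕ) : ℝ) / (u : ℝ) := by push_cast; ring
        _ ≤ (j : ℝ) * ξ := by
            rw [div_le_iff₀ hu0]
            have hj0 : (0 : ℝ) ≤ (j : ℝ) := by positivity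
            nlinarith [hvuξ]
    have hsum_le := Finset.sum_le_sum hmono
    generalize hQ : N * M = Q at hkey hstar
    omega
  -- step 3 : construct ξ'
  set Slow : Finset ℝ :=
    insert 0 ((Finset.Icc 1 N).image fun u : ℕ => ((min M ⌊(u : ℝ) * ξ⌋₊ : ℕ) : ℝ) / u)
    with hSlowdef
  have hSlow_ne : Slow.Nonempty := ⟨0, by simp [hSlowdef]⟩
  set L := Slow.max' hSlow_ne with hLdef
  have hLle : L ≤ ξ := by
    apply Finset.max'_le
    intro y hy
    simp only [hSlowdef, Finset.mem_insert, Finset.mem_image, Finset.mem_Icc] at hy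
    rcases hy with rfl | ⟨u, hu, rfl⟩
    · exact h0.le
    · have hu0 : (0 : ℝ) < (u : ℝ) := by exact_mod_cast hu.1
      rw [div_le_iff₀ hu0]
      have h1 : ((min M ⌊(u : ℝ) * ξ⌋₊ : ℕ) : ℝ) ≤ (⌊(u : ℝ) * ξ⌋₊ : ℝ) := by
        exact_mod_cast min_le_right M _
      have h2 : (⌊(u : ℝ) * ξ⌋₊ : ℝ) ≤ (u : ℝ) * ξ := Nat.floor_le (by positivity)
      nlinarith
  have hL0 : (0 : ℝ) ≤ L := Finset.le_max' _ _ (by simp [hSlowdef])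
  set c : ℝ := if N = 0 then L + 1 else ((M + 1 : ℕ) : ℝ) / (N : ℝ) with hcdef
  have hLc : L < c := by
    rcases Nat.eq_zero_or_pos N with hN0 | hN0
    · rw [hcdef, if_pos hN0]; linarith
    · rw [hcdef, if_neg (by omega)]
      apply (Finset.max'_lt_iff _ _).mpr
      intro y hy
      simp only [hSlowdef, Finset.mem_insert, Finset.mem_image, Finset.mem_Icc] at hy
      have hN0' : (0 : ℝ) < (N : ℝ) := by exact_mod_cast hN0
      rcases hy with rfl | ⟨u, hu, rfl⟩
      · positivity
      · have hu0 : (0 : ℝ) < (u : ℝ) := by exact_mod_cast hu.1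
        rw [div_lt_div_iff₀ hu0 hN0']
        have h := hvlt u hu.1 hu.2
        rw [mul_comm u (M + 1)] at h
        exact_mod_cast h
  set Sup : Finset ℝ :=
    insert c (((Finset.Icc 1 N).filter fun u : ℕ => min M ⌊(u : ℝ) * ξ⌋₊ < M).image
      fun u : ℕ => (((min M ⌊(u : ℝ) * ξ⌋₊ : ℕ) : ℝ) + 1) / u) with hSupdef
  have hSup_ne : Sup.Nonempty := ⟨c, by simp [hSupdef]⟩
  set W := Sup.min' hSup_ne with hWdef
  have hLW : L < W := by
    apply (Finset.lt_min'_iff _ _).mpr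
    intro y hy
    simp only [hSupdef, Finset.mem_insert, Finset.mem_image, Finset.mem_filter,
      Finset.mem_Icc] at hy
    rcases hy with rfl | ⟨u, ⟨hu, hvu⟩, rfl⟩
    · exact hLc
    · have hu0 : (0 : ℝ) < (u : ℝ) := by exact_mod_cast hu.1
      have hfl : ⌊(u : ℝ) * ξ⌋₊ = min M ⌊(u : ℝ) * ξ⌋₊ := by omega
      have hflt : (u : ℝ) * ξ < (⌊(u : ℝ) * ξ⌋₊ : ℝ) + 1 := Nat.lt_floor_add_one _
      have : ξ < (((min M ⌊(u : ℝ) * ξ⌋₊ : ℕ) : ℝ) + 1) / u := by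
        rw [lt_div_iff₀ hu0]
        rw [← hfl]
        nlinarith
      linarith
  obtain ⟨ξ', hirr, hlo, hhi⟩ := exists_irrational_btwn hLW
  have hpos' : 0 < ξ' := lt_of_le_of_lt hL0 hlo
  have hNT' : ∀ u : ℕ, 1 ≤ u → ∀ k : ℕ, (u : ℝ) * ξ' ≠ (k : ℝ) := by
    intro u hu k heq
    have hu0 : (u : ℝ) ≠ 0 := by
      simp only [ne_eq, Nat.cast_eq_zero]; omega
    apply hirr
    refine ⟨(k : ℚ) / (u : ℚ), ?_⟩
    push_cast
    rw [eq_comm, eq_div_iff hu0]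
    linear_combination heq
  have hNlt : (N : ℝ) * ξ' < (M : ℝ) + 1 := by
    rcases Nat.eq_zero_or_pos N with hN0 | hN0
    · rw [hN0]; push_cast; nlinarith
    · have hWc : W ≤ c := Finset.min'_le _ _ (by simp [hSupdef])
      have hxc : ξ' < c := lt_of_lt_of_le hhi hWc
      rw [hcdef, if_neg (by omega)] at hxc
      have hN0' : (0 : ℝ) < (N : ℝ) := by exact_mod_cast hN0
      rw [lt_div_iff₀ hN0'] at hxc
      push_cast at hxc
      nlinarith
  have hfle : ∀ u : ℕ, u ≤ N → ⌊(u : ℝ) * ξ'⌋₊ ≤ M := by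
    intro u huN
    have h1 : (u : ℝ) * ξ' ≤ (N : ℝ) * ξ' := by
      apply mul_le_mul_of_nonneg_right _ hpos'.le
      exact_mod_cast huN
    have h2 : ⌊(u : ℝ) * ξ'⌋₊ < M + 1 := by
      rw [Nat.floor_lt (by positivity)]
      push_cast
      linarith
    omega
  have hfloor' : ∀ u : ℕ, 1 ≤ u → u ≤ N → ⌊(u : ℝ) * ξ'⌋₊ = min M ⌊(u : ℝ) * ξ⌋₊ := by
    intro u hu1 huN
    have hu0 : (0 : ℝ) < (u : ℝ) := by exact_mod_cast hu1
    have h1 : ((min M ⌊(u : ℝ) * ξ⌋₊ : ℕ) : ℝ) / u ≤ L := by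
      apply Finset.le_max'
      simp only [hSlowdef, Finset.mem_insert, Finset.mem_image, Finset.mem_Icc]
      right
      exact ⟨u, ⟨hu1, huN⟩, rfl⟩
    have h2 : ((min M ⌊(u : ℝ) * ξ⌋₊ : ℕ) : ℝ) < (u : ℝ) * ξ' := by
      have := lt_of_le_of_lt h1 hlo
      rw [div_lt_iff₀ hu0] at this
      nlinarith
    have hflge : min M ⌊(u : ℝ) * ξ⌋₊ ≤ ⌊(u : ℝ) * ξ'⌋₊ := Nat.le_floor h2.le
    by_cases hvu : min M ⌊(u : ℝ) * ξ⌋₊ < M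
    · have hup2 : ξ' < (((min M ⌊(u : ℝ) * ξ⌋₊ : ℕ) : ℝ) + 1) / u := by
        apply lt_of_lt_of_le hhi
        apply Finset.min'_le
        simp only [hSupdef, Finset.mem_insert, Finset.mem_image, Finset.mem_filter,
          Finset.mem_Icc]
        right
        exact ⟨u, ⟨⟨hu1, huN⟩, hvu⟩, rfl⟩
      rw [lt_div_iff₀ hu0] at hup2
      have hlt2 : ⌊(u : ℝ) * ξ'⌋₊ < min M ⌊(u : ℝ) * ξ⌋₊ + 1 := by
        rw [Nat.floor_lt (by positivity)]
        have hcast : ((min M ⌊(u : ℝ) * ξ⌋₊ + 1 : ℕ) : ℝ)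
            = ((min M ⌊(u : ℝ) * ξ⌋₊ : ℕ) : ℝ) + 1 := by push_cast; ring
        rw [hcast]
        nlinarith [hup2]
      omega
    · have := hfle u huN
      omega
  -- the two tau computations for ξ'
  have hNT'' : ∀ u : ℕ, 1 ≤ u → u ≤ (N + 1) - 1 → ∀ k : ℕ, 1 ≤ k → k ≤ M + 1 →
      (u : ℝ) * ξ' ≠ (k : ℝ) := fun u hu _ k _ _ => hNT' u hu k
  have hA' : tau (M + 1 + 1) (N + 1) ξ' (M + 1 + 1) 1
      = (M + 1 + 1) + ∑ u ∈ Finset.Icc 1 N, ((M + 1) - min (M + 1) ⌊(u : ℝ) * ξ'⌋₊) := by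
    have := tauA_formula (M + 1) (N + 1) (by omega) ξ' hpos' hNT''
    simpa using this
  have hB' : tau (M + 1 + 1) (N + 1) ξ' 1 (N + 1)
      = (N + 1) + ∑ u ∈ Finset.Icc 1 N, min (M + 1) ⌊(u : ℝ) * ξ'⌋₊ := by
    have := tauB_formula (M + 1) (N + 1) (by omega) ξ' hpos'
    simpa using this
  have hterm1 : ∀ u ∈ Finset.Icc 1 N,
      (M + 1) - min (M + 1) ⌊(u : ℝ) * ξ'⌋₊ = (M - min M ⌊(u : ℝ) * ξ⌋₊) + 1 := by
    intro u hu
    simp only [Finset.mem_Icc] at hu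
    rw [hfloor' u hu.1 hu.2]
    have := hvle u
    omega
  have hterm2 : ∀ u ∈ Finset.Icc 1 N,
      min (M + 1) ⌊(u : ℝ) * ξ'⌋₊ = min M ⌊(u : ℝ) * ξ⌋₊ := by
    intro u hu
    simp only [Finset.mem_Icc] at hu
    rw [hfloor' u hu.1 hu.2]
    have := hvle u
    omega
  refine ⟨ξ', hpos', ?_, ?_, ?_⟩
  · -- injectivity
    intro p hp q hq heq
    simp only at heq
    have hq' : q ∈ Finset.Icc 1 (M + 1 + 1) ×ˢ Finset.Icc 1 (N + 1) := Finset.mem_coe.mp hq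
    have hp' : p ∈ Finset.Icc 1 (M + 1 + 1) ×ˢ Finset.Icc 1 (N + 1) := Finset.mem_coe.mp hp
    have hpq : (p.1 : ℝ) + (p.2 : ℝ) * ξ' = (q.1 : ℝ) + (q.2 : ℝ) * ξ' := by
      by_contra hne
      rcases lt_or_gt_of_ne hne with h' | h'
      · exact absurd heq (Nat.ne_of_lt (tau_lt hq' h'))
      · exact absurd heq.symm (Nat.ne_of_lt (tau_lt hp' h'))
    have h2 : p.2 = q.2 := by
      by_contra h2
      rcases Nat.lt_or_ge p.2 q.2 with h' | h'
      · have hd : ((q.2 - p.2 : ℕ) : ℝ) * ξ' = (p.1 : ℝ) - (q.1 : ℝ) := by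
          rw [Nat.cast_sub h'.le]
          ring_nf
          nlinarith [hpq]
        have hgt : (q.1 : ℝ) < (p.1 : ℝ) := by
          have hdpos : (0 : ℝ) < ((q.2 - p.2 : ℕ) : ℝ) := by
            have : 1 ≤ q.2 - p.2 := by omega
            exact_mod_cast this
          nlinarith [hd]
        have hgt' : q.1 ≤ p.1 := by
          have : (q.1 : ℝ) ≤ (p.1 : ℝ) := hgt.le
          exact_mod_cast this
        apply hNT' (q.2 - p.2) (by omega) (p.1 - q.1)
        rw [hd, Nat.cast_sub hgt']
      · have h'' : q.2 < p.2 := by omega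
        have hd : ((p.2 - q.2 : ℕ) : ℝ) * ξ' = (q.1 : ℝ) - (p.1 : ℝ) := by
          rw [Nat.cast_sub h''.le]
          ring_nf
          nlinarith [hpq]
        have hgt : (p.1 : ℝ) < (q.1 : ℝ) := by
          have hdpos : (0 : ℝ) < ((p.2 - q.2 : ℕ) : ℝ) := by
            have : 1 ≤ p.2 - q.2 := by omega
            exact_mod_cast this
          nlinarith [hd]
        have hgt' : p.1 ≤ q.1 := by
          have : (p.1 : ℝ) ≤ (q.1 : ℝ) := hgt.le
          exact_mod_cast this
        apply hNT' (p.2 - q.2) (by omega) (q.1 - p.1)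
        rw [hd, Nat.cast_sub hgt']
    have h1 : p.1 = q.1 := by
      have : (p.1 : ℝ) = (q.1 : ℝ) := by
        rw [h2] at hpq
        linarith
      exact_mod_cast this
    exact Prod.ext h1 h2
  · -- A value
    rw [hA', Finset.sum_congr rfl hterm1, Finset.sum_add_distrib, Finset.sum_const,
      smul_eq_mul, mul_one, Nat.card_Icc, Nat.add_sub_cancel, hA]
    omega
  · -- B value
    rw [hB', Finset.sum_congr rfl hterm2, hB]
end

section
/- Let m and n be positive integers and let (a,b) ∈ G^{int}_{m,n}. Then it is not the case that both a ≤ m/(n+1) and (m+1)/n ≤ b hold. -/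
open Finset
open scoped Classical
open scoped ENNReal

theorem natCast_div_natCast_mem_Gset {m n p q : ℕ} (hp : p ∈ Icc 1 m) (hq : q ∈ Icc 1 n) :
    (p : ℝ≥0∞) / q ∈ Gset m n :=
  Or.inr ⟨p, hp, q, hq, rfl⟩

/-- for `(a,b) ∈ G^{int}_{m,n}` it is impossible that both `a ≤ m/(n+1)`
and `(m+1)/n ≤ b`. -/
theorem not_le_and_le (m n : ℕ) (hm : 1 ≤ m) (hn : 1 ≤ n)
    (a b : ℝ≥0∞) (hab : (a, b) ∈ GInt m n) :
    ¬(a ≤ (m : ℝ≥0∞) / ((n : ℝ≥0∞) + 1) ∧ ((m : ℝ≥0∞) + 1) / (n : ℝ≥0∞) ≤ b) := by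
  rintro ⟨ha, hb⟩
  obtain ⟨-, -, -, hadjacent⟩ := hab
  have hm0 : (m : ℝ≥0∞) ≠ 0 := by exact_mod_cast Nat.one_le_iff_ne_zero.mp hm
  have hn0 : (n : ℝ≥0∞) ≠ 0 := by exact_mod_cast Nat.one_le_iff_ne_zero.mp hn
  have hmn_mem : (m : ℝ≥0∞) / n ∈ Gset m n :=
    natCast_div_natCast_mem_Gset (mem_Icc.2 ⟨hm, le_rfl⟩) (mem_Icc.2 ⟨hn, le_rfl⟩)
  have hlt_left : (m : ℝ≥0∞) / (n + 1) < m / n :=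
    ENNReal.div_lt_div_left hm0 (ENNReal.natCast_ne_top m)
      (ENNReal.lt_add_right (ENNReal.natCast_ne_top n) one_ne_zero)
  have hlt_right : (m : ℝ≥0∞) / n < (m + 1) / n :=
    ENNReal.div_lt_div_right hn0 (ENNReal.natCast_ne_top n)
      (ENNReal.lt_add_right (ENNReal.natCast_ne_top m) one_ne_zero)
  exact hadjacent _ hmn_mem ⟨ha.trans_lt hlt_left, hlt_right.trans_le hb⟩
end
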